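/- arXiv:2603.13737 — 5 statements merged into one kernel-verified Lean document; each statement's English description precedes it below -/
import Mathlib

section
/- Let X be a finite set, let F ⊆ 2^X be an increasing family with F ≠ ∅ and F ≠ 2^X, let 0 < ε < 1, and let p* ∈ [0,1]^X satisfy ε < μ_{p*}(F) < 1 − ε. Then for every integer m ≥ 1: (i) μ_{p'}(F) ≥ 1 − (1−ε)^m, where p'_x = min(1, m·p*_x) for every x ∈ X; and (ii) μ_{p*/m}(F) ≤ 1 − ε^{1/m}. In particular, if m = m(n) → ∞ as |X| → ∞ then μ_{p'}(F) → 1 and μ_{p*/m}(F) → 0. -/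
/-!
Sprinkling: the union of independent `p`- and `q`-random subsets of `X` is `r`-random with
`r = p + (1 - p) q`, and since `F` is increasing the union lies outside `F` only if both sets do.
Hence `1 - μ_r(F) ≤ (1 - μ_p(F)) (1 - μ_q(F))`, and iterating, the union of `m` independent
`p`-random sets gives `1 - μ_{1 - (1 - p)^m}(F) ≤ (1 - μ_p(F))^m`. Since `1 - (1 - p)^m ≤ m p`
(Bernoulli) and `μ_p(F)` is monotone in `p` (write a larger `q` as `p` sprinkled with
`(q - p) / (1 - p)`), this gives (i) for `p*`, and (ii) by applying it to `p* / m`.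
-/

open Finset

/-- The product measure of a family of subsets of a finite set `X`:
`μ_p(F) = ∑_{S ∈ F} ∏_{x ∈ S} p x · ∏_{y ∉ S} (1 - p y)`. -/
noncomputable def mu {X : Type*} [Fintype X] [DecidableEq X]
    (p : X → ℝ) (F : Finset (Finset X)) : ℝ :=
  ∑ S ∈ F, (∏ x ∈ S, p x) * ∏ y ∈ Sᶜ, (1 - p y)

theorem one_sub_one_sub_pow_nonneg_and_le_one {a : ℝ} (ha : 0 ≤ a ∧ a ≤ 1) (n : ℕ) :
    0 ≤ 1 - (1 - a) ^ n ∧ 1 - (1 - a) ^ n ≤ 1 :=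
  ⟨sub_nonneg.2 (pow_le_one₀ (sub_nonneg.2 ha.2) (by linarith [ha.1])),
    sub_le_self _ (pow_nonneg (sub_nonneg.2 ha.2) n)⟩

theorem one_sub_one_sub_pow_le_mul {a : ℝ} (ha : a ≤ 2) (n : ℕ) :
    1 - (1 - a) ^ n ≤ n * a := by
  have := one_add_mul_le_pow (a := -a) (by linarith) n
  rw [← sub_eq_add_neg] at this
  linarith

theorem Finset.union_eq_iff_subset_and_mem_Icc {α : Type*} [DecidableEq α]
    {S T U : Finset α} :
    S ∪ T = U ↔ S ⊆ U ∧ T ∈ Icc (U \ S) U := by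
  rw [mem_Icc]
  refine ⟨?_, fun ⟨hSU, hUT, hTU⟩ =>
    subset_antisymm (union_subset hSU hTU) (sdiff_le_iff.1 hUT)⟩
  rintro rfl
  exact ⟨subset_union_left, sdiff_le_iff.2 le_rfl, subset_union_right⟩

namespace ProductMeasure

variable {X : Type*} [Fintype X] [DecidableEq X]

noncomputable def weight (p : X → ℝ) (S : Finset X) : ℝ :=
  (∏ x ∈ S, p x) * ∏ y ∈ Sᶜ, (1 - p y)

def sprinkle (p q : X → ℝ) : X → ℝ :=
  fun x => p x + (1 - p x) * q x

theorem mu_eq_sum_weight (p : X → ℝ) (F : Finset (Finset X)) :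
    mu p F = ∑ S ∈ F, weight p S := rfl

theorem weight_nonneg {p : X → ℝ} (hp : ∀ x, 0 ≤ p x ∧ p x ≤ 1) (S : Finset X) :
    0 ≤ weight p S :=
  mul_nonneg (prod_nonneg fun x _ => (hp x).1) (prod_nonneg fun y _ => sub_nonneg.2 (hp y).2)

theorem sum_weight (p : X → ℝ) : ∑ S, weight p S = 1 := by
  simpa [weight, compl_eq_univ_sdiff] using (prod_add p (fun x => 1 - p x) univ).symm

theorem mu_nonneg {p : X → ℝ} (hp : ∀ x, 0 ≤ p x ∧ p x ≤ 1) (F : Finset (Finset X)) :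
    0 ≤ mu p F :=
  sum_nonneg fun S _ => weight_nonneg hp S

theorem mu_le_one {p : X → ℝ} (hp : ∀ x, 0 ≤ p x ∧ p x ≤ 1) (F : Finset (Finset X)) :
    mu p F ≤ 1 :=
  sum_weight p ▸ sum_le_univ_sum_of_nonneg fun S => weight_nonneg hp S

theorem mu_compl (p : X → ℝ) (F : Finset (Finset X)) : mu p Fᶜ = 1 - mu p F := by
  rw [← sum_weight p, ← sum_compl_add_sum F, mu_eq_sum_weight, mu_eq_sum_weight,
    add_sub_cancel_right]

theorem sum_weight_Icc (q : X → ℝ) {A B : Finset X} (hAB : A ⊆ B) :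
    ∑ T ∈ Icc A B, weight q T = (∏ x ∈ A, q x) * ∏ y ∈ Bᶜ, (1 - q y) := by
  have hinj : Set.InjOn (A ∪ ·) (B \ A).powerset := fun R₁ h₁ R₂ h₂ h => by
    simpa [union_sdiff_cancel_left (disjoint_of_subset_right (mem_powerset.1 h₁) disjoint_sdiff),
      union_sdiff_cancel_left (disjoint_of_subset_right (mem_powerset.1 h₂) disjoint_sdiff)]
      using congrArg (· \ A) h
  have hweight : ∀ R ∈ (B \ A).powerset, weight q (A ∪ R) =
      (∏ x ∈ A, q x) * (∏ y ∈ Bᶜ, (1 - q y)) *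
        ((∏ x ∈ R, q x) * ∏ y ∈ (B \ A) \ R, (1 - q y)) := by
    intro R hR
    have hRBA := mem_powerset.1 hR
    have hcompl : (A ∪ R)ᶜ = ((B \ A) \ R) ∪ Bᶜ := by
      ext x
      have := @hAB x
      have := @hRBA x
      simp only [mem_compl, mem_union, mem_sdiff] at *
      tauto
    rw [weight, prod_union (disjoint_of_subset_right hRBA disjoint_sdiff), hcompl,
      prod_union (disjoint_compl_right.mono_left (sdiff_subset.trans sdiff_subset))]
    ring
  rw [Icc_eq_image_powerset hAB, sum_image hinj, sum_congr rfl hweight, ← mul_sum, ← prod_add]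
  simp

theorem sum_weight_mul_weight_of_union_eq (p q : X → ℝ) (U : Finset X) :
    ∑ x : Finset X × Finset X with x.1 ∪ x.2 = U, weight p x.1 * weight q x.2 =
      weight (sprinkle p q) U := by
  rw [sum_finset_product' _ U.powerset (fun S => Icc (U \ S) U)
    (fun x => by simp [union_eq_iff_subset_and_mem_Icc]) (f := fun S T => weight p S * weight q T)]
  have hS : ∀ S ∈ U.powerset, ∑ T ∈ Icc (U \ S) U, weight p S * weight q T =
      ((∏ x ∈ S, p x) * ∏ x ∈ U \ S, (1 - p x) * q x) *
        ∏ y ∈ Uᶜ, (1 - p y) * (1 - q y) := by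
    intro S hS
    rw [← mul_sum, sum_weight_Icc q sdiff_subset, weight,
      ← prod_sdiff (compl_subset_compl.2 (mem_powerset.1 hS)), compl_sdiff_compl,
      prod_mul_distrib, prod_mul_distrib]
    ring
  rw [sum_congr rfl hS, ← sum_mul, ← prod_add, weight]
  congr 1
  exact prod_congr rfl fun x _ => by simp only [sprinkle]; ring

theorem mu_sprinkle (p q : X → ℝ) (F : Finset (Finset X)) :
    mu (sprinkle p q) F =
      ∑ x : Finset X × Finset X with x.1 ∪ x.2 ∈ F, weight p x.1 * weight q x.2 := by
  rw [← sum_fiberwise_eq_sum_filter, mu_eq_sum_weight]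
  exact sum_congr rfl fun U _ => (sum_weight_mul_weight_of_union_eq p q U).symm

section Increasing

variable {p q : X → ℝ} (hp : ∀ x, 0 ≤ p x ∧ p x ≤ 1) {F : Finset (Finset X)}
  (hInc : ∀ S ∈ F, ∀ T : Finset X, S ⊆ T → T ∈ F)
include hp hInc

theorem mu_le_mu_sprinkle (hq : ∀ x, 0 ≤ q x ∧ q x ≤ 1) :
    mu p F ≤ mu (sprinkle p q) F := by
  have hsub : F ×ˢ univ ⊆ ({x | x.1 ∪ x.2 ∈ F} : Finset (Finset X × Finset X)) :=
    fun x hx => by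
      simp only [mem_product, mem_filter, mem_univ, true_and] at hx ⊢
      exact hInc _ hx.1 _ subset_union_left
  calc mu p F = ∑ x ∈ F ×ˢ univ, weight p x.1 * weight q x.2 := by
        rw [sum_product, ← sum_mul_sum, sum_weight, mul_one, mu_eq_sum_weight]
    _ ≤ mu (sprinkle p q) F := by
      rw [mu_sprinkle]
      exact sum_le_sum_of_subset_of_nonneg hsub fun x _ _ =>
        mul_nonneg (weight_nonneg hp _) (weight_nonneg hq _)

theorem one_sub_mu_sprinkle_le (hq : ∀ x, 0 ≤ q x ∧ q x ≤ 1) :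
    1 - mu (sprinkle p q) F ≤ (1 - mu p F) * (1 - mu q F) := by
  have hsub : ({x | x.1 ∪ x.2 ∈ Fᶜ} : Finset (Finset X × Finset X)) ⊆ Fᶜ ×ˢ Fᶜ :=
    fun x hx => by
      simp only [mem_product, mem_filter, mem_univ, true_and, mem_compl] at hx ⊢
      exact ⟨fun h => hx (hInc _ h _ subset_union_left),
        fun h => hx (hInc _ h _ subset_union_right)⟩
  rw [← mu_compl, ← mu_compl, ← mu_compl, mu_sprinkle]
  calc _ ≤ ∑ x ∈ Fᶜ ×ˢ Fᶜ, weight p x.1 * weight q x.2 :=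
        sum_le_sum_of_subset_of_nonneg hsub fun x _ _ =>
          mul_nonneg (weight_nonneg hp _) (weight_nonneg hq _)
    _ = mu p Fᶜ * mu q Fᶜ := by rw [sum_product, ← sum_mul_sum]; rfl

theorem mu_mono (hq : ∀ x, q x ≤ 1) (hpq : ∀ x, p x ≤ q x) : mu p F ≤ mu q F := by
  -- where `p x = 1`, also `q x = 1`, and the junk value `(q x - p x) / 0 = 0` is harmless
  have hsprinkle : sprinkle p (fun x => (q x - p x) / (1 - p x)) = q := by
    funext x
    rcases (hp x).2.lt_or_eq with hlt | heq
    · simp only [sprinkle]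
      field_simp [(sub_pos.2 hlt).ne']
      ring
    · simp [sprinkle, heq, le_antisymm (hq x) (heq ▸ hpq x)]
  have hr : ∀ x, 0 ≤ (q x - p x) / (1 - p x) ∧ (q x - p x) / (1 - p x) ≤ 1 := fun x =>
    ⟨div_nonneg (sub_nonneg.2 (hpq x)) (sub_nonneg.2 (hp x).2),
      div_le_one_of_le₀ (sub_le_sub_right (hq x) _) (sub_nonneg.2 (hp x).2)⟩
  simpa only [hsprinkle] using mu_le_mu_sprinkle hp hInc hr

theorem one_sub_mu_le_pow (m : ℕ) :
    1 - mu (fun x => 1 - (1 - p x) ^ m) F ≤ (1 - mu p F) ^ m := by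
  induction m with
  | zero => simpa using mu_nonneg (p := fun _ => 0) (by simp) F
  | succ n ih =>
    have hsucc : sprinkle (fun x => 1 - (1 - p x) ^ n) p = fun x => 1 - (1 - p x) ^ (n + 1) := by
      funext x
      simp only [sprinkle]
      ring
    calc 1 - mu (fun x => 1 - (1 - p x) ^ (n + 1)) F
        ≤ (1 - mu (fun x => 1 - (1 - p x) ^ n) F) * (1 - mu p F) := hsucc ▸
          one_sub_mu_sprinkle_le (fun x => one_sub_one_sub_pow_nonneg_and_le_one (hp x) n) hInc hp
      _ ≤ (1 - mu p F) ^ n * (1 - mu p F) :=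
        mul_le_mul_of_nonneg_right ih (sub_nonneg.2 (mu_le_one hp F))
      _ = (1 - mu p F) ^ (n + 1) := (pow_succ _ n).symm

theorem one_sub_pow_le_mu_min_mul (m : ℕ) :
    1 - (1 - mu p F) ^ m ≤ mu (fun x => min 1 (m * p x)) F := by
  have hbound : ∀ x, 1 - (1 - p x) ^ m ≤ min 1 (m * p x) := fun x =>
    le_min (one_sub_one_sub_pow_nonneg_and_le_one (hp x) m).2
      (one_sub_one_sub_pow_le_mul (by linarith [(hp x).2]) m)
  have hmono := mu_mono (fun x => one_sub_one_sub_pow_nonneg_and_le_one (hp x) m) hInc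
    (fun x => min_le_left _ _) hbound
  linarith [one_sub_mu_le_pow hp hInc m]

theorem mu_div_le_one_sub_rpow {m : ℕ} (hm : 1 ≤ m) :
    mu (fun x => p x / m) F ≤ 1 - (1 - mu p F) ^ ((1 : ℝ) / m) := by
  have hm0 : (0 : ℝ) < m := by exact_mod_cast hm
  have hq : ∀ x, 0 ≤ p x / m ∧ p x / m ≤ 1 := fun x =>
    ⟨div_nonneg (hp x).1 hm0.le, (div_le_self (hp x).1 (by exact_mod_cast hm)).trans (hp x).2⟩
  have hbound : ∀ x, 1 - (1 - p x / m) ^ m ≤ p x := fun x => by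
    simpa [mul_div_cancel₀ _ hm0.ne'] using
      one_sub_one_sub_pow_le_mul (by linarith [(hq x).2]) m (a := p x / m)
  have hmono := mu_mono (fun x => one_sub_one_sub_pow_nonneg_and_le_one (hq x) m) hInc
    (fun x => (hp x).2) hbound
  have hroot : (1 - mu p F) ^ ((1 : ℝ) / m) ≤ 1 - mu (fun x => p x / m) F := by
    rw [one_div, Real.rpow_inv_le_iff_of_pos (sub_nonneg.2 (mu_le_one hp F))
      (sub_nonneg.2 (mu_le_one hq F)) hm0, Real.rpow_natCast]
    linarith [one_sub_mu_le_pow hq hInc m]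
  linarith

end Increasing

end ProductMeasure

open ProductMeasure in
theorem stmt0_general {X : Type*} [Fintype X] [DecidableEq X]
    (F : Finset (Finset X))
    (hInc : ∀ S ∈ F, ∀ T : Finset X, S ⊆ T → T ∈ F)
    (ε : ℝ) (hε0 : 0 < ε)
    (pstar : X → ℝ) (hp : ∀ x, 0 ≤ pstar x ∧ pstar x ≤ 1)
    (hlo : ε < mu pstar F) (hhi : mu pstar F < 1 - ε)
    (m : ℕ) (hm : 1 ≤ m) :
    1 - (1 - ε) ^ m ≤ mu (fun x => min 1 (m * pstar x)) F ∧
    mu (fun x => pstar x / m) F ≤ 1 - ε ^ ((1 : ℝ) / m) := by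
  constructor
  · calc 1 - (1 - ε) ^ m ≤ 1 - (1 - mu pstar F) ^ m := by
          gcongr
          linarith [mu_le_one hp F]
      _ ≤ _ := one_sub_pow_le_mu_min_mul hp hInc m
  · calc mu (fun x => pstar x / m) F ≤ 1 - (1 - mu pstar F) ^ ((1 : ℝ) / m) :=
          mu_div_le_one_sub_rpow hp hInc hm
      _ ≤ 1 - ε ^ ((1 : ℝ) / m) := by
          gcongr
          linarith

theorem stmt0 {X : Type*} [Fintype X] [DecidableEq X]
    (F : Finset (Finset X))
    (hInc : ∀ S ∈ F, ∀ T : Finset X, S ⊆ T → T ∈ F)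
    (hne : F.Nonempty) (hnfull : F ≠ Finset.univ.powerset)
    (ε : ℝ) (hε0 : 0 < ε) (hε1 : ε < 1)
    (pstar : X → ℝ) (hp : ∀ x, 0 ≤ pstar x ∧ pstar x ≤ 1)
    (hlo : ε < mu pstar F) (hhi : mu pstar F < 1 - ε)
    (m : ℕ) (hm : 1 ≤ m) :
    1 - (1 - ε) ^ m ≤ mu (fun x => min 1 (m * pstar x)) F ∧
    mu (fun x => pstar x / m) F ≤ 1 - ε ^ ((1 : ℝ) / m) :=
  stmt0_general F hInc ε hε0 pstar hp hlo hhi m hm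
end

section
/- Let d = (d_1,…,d_n) be a bi-valued degree sequence on [n] with n even, taking value d_1 on n_1 vertices and value d_2 < d_1 on n_2 = n − n_1 vertices. Let α > 0 and let x ∈ {1,2} be such that n_x = max(n_1,n_2), taking x = 1 if n_1 = n_2, and assume α·log n ≤ n_x (so that the capping at 1 in the Chung–Lu edge probabilities is immaterial). Then the graph spectrum 𝔊^α_PM(U_d, P_d) has a perfect matching if and only if d_x·d_2 / ‖d‖_1 ≥ α·log n / n_x. -/
open Finset

/-- The set of (ordered representatives of) unordered pairs of distinct vertices. -/
def pairs (n : ℕ) : Finset (Fin n × Fin n) := Finset.univ.filter fun e => e.1 < e.2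

/-- `M` is a perfect matching of the vertex set `Fin n`. -/
def IsPM {n : ℕ} (M : Finset (Fin n × Fin n)) : Prop :=
  M ⊆ pairs n ∧ ∀ v : Fin n, ∃! e : Fin n × Fin n, e ∈ M ∧ (v = e.1 ∨ v = e.2)

/-- The (deterministic) graph with adjacency predicate `adj` has a perfect matching. -/
def HasPMadj (n : ℕ) (adj : Fin n × Fin n → Prop) : Prop :=
  ∃ M : Finset (Fin n × Fin n), IsPM M ∧ ∀ e ∈ M, adj e

/-- Degree parameter of a vertex for a bi-valued sequence: the first `n1` vertices get
`d1` and the rest get `d2`. -/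
def bideg (n1 d1 d2 : ℕ) {n : ℕ} (v : Fin n) : ℕ := if v.val < n1 then d1 else d2

/-!
Pairing `i` with `n - 1 - i` is a perfect matching in which every edge meets `U_x` (for `x = 1`
the smaller endpoint is below `n_1 ≥ n/2`, for `x = 2` the larger one is at least `n/2 > n_1`).
Each such edge therefore has threshold `α log n / n_x` and probability at least
`d_x d_2 / ‖d‖₁`, and `α log n ≤ n_x` makes the cap at `1` harmless.
Conversely, a perfect matching always has an edge of probability at most `d_x d_2 / ‖d‖₁` and
threshold at least `α log n / n_x`: if `n_1 ≥ n_2`, the edge at any vertex of `U_2`; if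
`n_1 < n_2`, the vertices of `U_2` cannot all be matched into the smaller class `U_1`, so some
edge lies inside `U_2`.
-/

lemma isPM_antipodal {n : ℕ} (hn : Even n) :
    IsPM (univ.filter fun e : Fin n × Fin n => e.1 < e.2 ∧ e.1.val + e.2.val = n - 1) := by
  refine ⟨fun e he => by simp_all [pairs], fun v => ?_⟩
  obtain ⟨r, rfl⟩ := hn
  have hv := v.isLt
  rcases lt_or_gt_of_ne (show v.val ≠ r + r - 1 - v.val by omega) with h | h
  · refine ⟨(v, ⟨r + r - 1 - v, by omega⟩), ⟨?_, .inl rfl⟩, ?_⟩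
    · simp only [mem_filter, mem_univ, true_and, Fin.lt_def]; omega
    rintro ⟨a, b⟩ ⟨hab, hv'⟩
    simp only [mem_filter, mem_univ, true_and, Fin.lt_def, Fin.ext_iff, Prod.mk.injEq] at hab hv' ⊢
    omega
  · refine ⟨(⟨r + r - 1 - v, by omega⟩, v), ⟨?_, .inr rfl⟩, ?_⟩
    · simp only [mem_filter, mem_univ, true_and, Fin.lt_def]; omega
    rintro ⟨a, b⟩ ⟨hab, hv'⟩
    simp only [mem_filter, mem_univ, true_and, Fin.lt_def, Fin.ext_iff, Prod.mk.injEq] at hab hv' ⊢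
    omega

lemma IsPM.exists_partner {n : ℕ} {M : Finset (Fin n × Fin n)} (hM : IsPM M) :
    ∃ partner : Fin n → Fin n, ∀ v, (v, partner v) ∈ M ∨ (partner v, v) ∈ M := by
  choose edge hedge using fun v => (hM.2 v).exists
  refine ⟨fun v => if v = (edge v).1 then (edge v).2 else (edge v).1, fun v => ?_⟩
  obtain ⟨hmem, hv⟩ := hedge v
  dsimp only
  split_ifs with h
  · exact .inl ((Prod.ext h rfl : (v, (edge v).2) = edge v) ▸ hmem)
  · exact .inr ((Prod.ext rfl (hv.resolve_left h) : ((edge v).1, v) = edge v) ▸ hmem)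

lemma IsPM.card_compl_le {n : ℕ} {M : Finset (Fin n × Fin n)} (hM : IsPM M) (A : Finset (Fin n))
    (hA : ∀ e ∈ M, e.1 ∈ A ∨ e.2 ∈ A) : #Aᶜ ≤ #A := by
  obtain ⟨partner, hpartner⟩ := hM.exists_partner
  have loopless v : (v, v) ∉ M := fun h => by simpa [pairs] using hM.1 h
  have partner_partner v : partner (partner v) = v := by
    have edge_unique {e e'} (he : e ∈ M) (he' : e' ∈ M) (h : partner v = e.1 ∨ partner v = e.2)
        (h' : partner v = e'.1 ∨ partner v = e'.2) : e = e' := (hM.2 _).unique ⟨he, h⟩ ⟨he', h'⟩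
    rcases hpartner v with h₁ | h₁ <;> rcases hpartner (partner v) with h₂ | h₂ <;>
      have := edge_unique h₁ h₂ (by simp) (by simp) <;> simp only [Prod.mk.injEq] at this
    all_goals grind
  refine card_le_card_of_injOn partner (fun v hv => ?_) (fun v _ w _ hvw => ?_)
  · rw [coe_compl, Set.mem_compl_iff, mem_coe] at hv
    rcases hpartner v with h | h <;> simpa [hv] using hA _ h
  · rw [← partner_partner v, hvw, partner_partner]

/-- `L` stands for `α log n`; the class size of a vertex is read off as `bideg n1 n1 n2`. -/
def spectrumAdj (n1 n2 d1 d2 : ℕ) (L : ℝ) {n : ℕ} (e : Fin n × Fin n) : Prop :=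
  L / ((max (bideg n1 n1 n2 e.1) (bideg n1 n1 n2 e.2) : ℕ) : ℝ)
    ≤ min 1 (((bideg n1 d1 d2 e.1 * bideg n1 d1 d2 e.2 : ℕ) : ℝ) / ((n1 * d1 + n2 * d2 : ℕ) : ℝ))

lemma div_le_div_of_le_min_div {L D : ℝ} (hL : 0 ≤ L) (hD : 0 ≤ D) {m N p q : ℕ}
    (hm : 0 < m) (hmN : m ≤ N) (hpq : p ≤ q) (h : L / m ≤ min 1 (p / D)) : L / N ≤ q / D :=
  calc L / N ≤ L / m := div_le_div_of_nonneg_left hL (by exact_mod_cast hm) (by exact_mod_cast hmN)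
    _ ≤ p / D := h.trans (min_le_right _ _)
    _ ≤ q / D := by gcongr

lemma le_min_one_div_of_div_le {L D : ℝ} (hD : 0 ≤ D) {N p q : ℕ} (hcap : L ≤ N) (hqp : q ≤ p)
    (h : L / N ≤ q / D) : L / N ≤ min 1 (p / D) :=
  le_min (div_le_one_of_le₀ hcap N.cast_nonneg) (h.trans (by gcongr))

section
variable {n n1 n2 d1 d2 : ℕ} {L : ℝ}

theorem le_of_hasPMadj_spectrumAdj (hn : n1 + n2 = n) (hn2 : 1 ≤ n2) (hd : d2 ≤ d1) (hL : 0 ≤ L)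
    (h : HasPMadj n (spectrumAdj n1 n2 d1 d2 L)) :
    L / ((if n2 ≤ n1 then n1 else n2 : ℕ) : ℝ)
      ≤ (((if n2 ≤ n1 then d1 else d2) * d2 : ℕ) : ℝ) / ((n1 * d1 + n2 * d2 : ℕ) : ℝ) := by
  obtain ⟨M, hM, hadj⟩ := h
  obtain ⟨e, heM, hmeets, hinside⟩ : ∃ e ∈ M,
      (n1 ≤ e.1.val ∨ n1 ≤ e.2.val) ∧ (n1 < n2 → n1 ≤ e.1.val ∧ n1 ≤ e.2.val) := by
    by_cases h12 : n1 < n2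
    · by_contra! hcon
      have := hM.card_compl_le (univ.filter (·.val < n1)) fun e he => by
        simp only [mem_filter, mem_univ, true_and]
        have := hcon e he
        omega
      simp only [card_compl, Fin.card_filter_val_lt, Fintype.card_fin] at this
      omega
    · obtain ⟨e, ⟨heM, hv⟩, -⟩ := hM.2 ⟨n1, by omega⟩
      refine ⟨e, heM, ?_, by omega⟩
      rcases hv with hv | hv <;> simp [← hv]
  refine div_le_div_of_le_min_div hL (Nat.cast_nonneg _) ?_ ?_ ?_ (hadj e heM)
  all_goals simp only [bideg]; split_ifs <;> first | omega | nlinarith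

theorem hasPMadj_spectrumAdj (hne : Even n) (hn : n1 + n2 = n) (hd : d2 ≤ d1)
    (hcap : L ≤ ((if n2 ≤ n1 then n1 else n2 : ℕ) : ℝ))
    (h : L / ((if n2 ≤ n1 then n1 else n2 : ℕ) : ℝ)
      ≤ (((if n2 ≤ n1 then d1 else d2) * d2 : ℕ) : ℝ) / ((n1 * d1 + n2 * d2 : ℕ) : ℝ)) :
    HasPMadj n (spectrumAdj n1 n2 d1 d2 L) := by
  refine ⟨_, isPM_antipodal hne, fun e he => ?_⟩
  simp only [mem_filter, mem_univ, true_and, Fin.lt_def] at he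
  have := e.2.isLt
  have hmax : max (bideg n1 n1 n2 e.1) (bideg n1 n1 n2 e.2) = if n2 ≤ n1 then n1 else n2 := by
    simp only [bideg]; split_ifs <;> omega
  unfold spectrumAdj
  rw [hmax]
  refine le_min_one_div_of_div_le (Nat.cast_nonneg _) hcap ?_ h
  simp only [bideg]; split_ifs <;> first | omega | nlinarith
end

theorem stmt9_general (n n1 n2 d1 d2 : ℕ) (hn : n1 + n2 = n) (hne : Even n)
    (hn2 : 1 ≤ n2) (hd21 : d2 < d1)
    (α : ℝ) (hα : 0 < α)
    (hcap : α * Real.log n ≤ ((if n2 ≤ n1 then n1 else n2 : ℕ) : ℝ)) :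
    HasPMadj n (fun e =>
      α * Real.log n /
          ((max (bideg n1 n1 n2 e.1) (bideg n1 n1 n2 e.2) : ℕ) : ℝ)
        ≤ min 1 (((bideg n1 d1 d2 e.1 * bideg n1 d1 d2 e.2 : ℕ) : ℝ) /
            ((n1 * d1 + n2 * d2 : ℕ) : ℝ)))
    ↔ α * Real.log n / ((if n2 ≤ n1 then n1 else n2 : ℕ) : ℝ)
        ≤ (((if n2 ≤ n1 then d1 else d2) * d2 : ℕ) : ℝ) /
            ((n1 * d1 + n2 * d2 : ℕ) : ℝ) :=
  have hL : 0 ≤ α * Real.log n := mul_nonneg hα.le (Real.log_natCast_nonneg n)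
  ⟨le_of_hasPMadj_spectrumAdj hn hn2 hd21.le hL, hasPMadj_spectrumAdj hne hn hd21.le hcap⟩

/-- For the bi-valued Chung–Lu model with `d2 < d1` (multiplicities `n1, n2`), and
`x` the index of a largest class (`x = 1` on ties), assuming `α·log n ≤ n_x`, the graph
spectrum `𝔊^α_PM(U_d, P_d)` has a perfect matching iff `d_x·d_2/‖d‖₁ ≥ α·log n / n_x`. -/
theorem stmt9 (n n1 n2 d1 d2 : ℕ) (hn : n1 + n2 = n) (hne : Even n)
    (hn1 : 1 ≤ n1) (hn2 : 1 ≤ n2) (hd21 : d2 < d1) (hd2 : 1 ≤ d2)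
    (α : ℝ) (hα : 0 < α)
    (hcap : α * Real.log n ≤ ((if n2 ≤ n1 then n1 else n2 : ℕ) : ℝ)) :
    HasPMadj n (fun e =>
      α * Real.log n /
          ((max (bideg n1 n1 n2 e.1) (bideg n1 n1 n2 e.2) : ℕ) : ℝ)
        ≤ min 1 (((bideg n1 d1 d2 e.1 * bideg n1 d1 d2 e.2 : ℕ) : ℝ) /
            ((n1 * d1 + n2 * d2 : ℕ) : ℝ)))
    ↔ α * Real.log n / ((if n2 ≤ n1 then n1 else n2 : ℕ) : ℝ)
        ≤ (((if n2 ≤ n1 then d1 else d2) * d2 : ℕ) : ℝ) /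
            ((n1 * d1 + n2 * d2 : ℕ) : ℝ) :=
  stmt9_general n n1 n2 d1 d2 hn hne hn2 hd21 α hα hcap
end

section
/- Let d = d(n) be a sequence of bi-valued degree sequences on [n] (value d_1 with multiplicity n_1 and value d_2 < d_1 with multiplicity n_2 = n − n_1) such that n_1 ≥ n_2 and n_2 ≥ n^c for some fixed constant c > 0. If d_1·d_2/‖d‖_1 = o(log n / n), then a.a.s. the Chung–Lu random graph G_CL(n,d) contains an isolated vertex lying in U_2; consequently a.a.s. G_CL(n,d) has no perfect matching. -/
/-!
Fix `S ⊆ U₂` with `|S| = ⌊n ^ γ⌋`, `γ = min c (1/4)` (possible since `n₂ ≥ n ^ c`); every edge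
meeting `S` has probability at most `q = d₁d₂/‖d‖₁ = r · log n / n` with `r → 0`. If no vertex of
`S` is isolated, then either some edge lies inside `S`, which has probability at most
`|S|² q ≤ r · log n · n ^ (2γ - 1) → 0`, or every `v ∈ S` has an edge leaving `S`. The sets of
edges leaving `S` at different `v ∈ S` are disjoint, so these events are independent and each
has probability at most `1 - (1 - q) ^ (2n) ≤ 1 - n ^ (-4r)`; hence their intersection has
probability at most `exp (-|S| n ^ (-4r)) → 0`. A perfect matching leaves no vertex isolated.
-/

open Finset Filter

def HasPM {n : ℕ} (A : Finset (Fin n × Fin n)) : Prop := ∃ M ⊆ A, IsPM M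

open Classical in
noncomputable def probGraph (n : ℕ) (p : Fin n × Fin n → ℝ)
    (Q : Finset (Fin n × Fin n) → Prop) : ℝ :=
  ∑ A ∈ (pairs n).powerset,
    if Q A then (∏ e ∈ A, p e) * ∏ e ∈ pairs n \ A, (1 - p e) else 0

section RandomSubset

variable {E : Type*} [DecidableEq E] {p : E → ℝ} {P U : Finset E}

def subsetWeight (p : E → ℝ) (P A : Finset E) : ℝ :=
  (∏ e ∈ A, p e) * ∏ e ∈ P \ A, (1 - p e)

open Classical in
/-- The probability that a random subset of `P`, containing each `e` independently with
probability `p e`, satisfies `Q`; `probGraph n p` is `subsetProb p (pairs n)`. -/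
noncomputable def subsetProb (p : E → ℝ) (P : Finset E) (Q : Finset E → Prop) : ℝ :=
  ∑ A ∈ P.powerset, if Q A then subsetWeight p P A else 0

lemma subsetWeight_nonneg (h0 : ∀ e, 0 ≤ p e) (h1 : ∀ e, p e ≤ 1) (A : Finset E) :
    0 ≤ subsetWeight p P A :=
  mul_nonneg (prod_nonneg fun e _ => h0 e) (prod_nonneg fun e _ => sub_nonneg.2 (h1 e))

lemma subsetWeight_eq_mul (hU : U ⊆ P) (A : Finset E) :
    subsetWeight p P A = subsetWeight p U (A ∩ U) * subsetWeight p (P \ U) (A \ U) := by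
  have hin : (P \ A) ∩ U = U \ (A ∩ U) := by ext e; grind
  have hout : (P \ A) \ U = (P \ U) \ (A \ U) := by ext e; grind
  rw [subsetWeight, ← prod_inter_mul_prod_sdiff A U, ← prod_inter_mul_prod_sdiff (P \ A) U,
    hin, hout, subsetWeight, subsetWeight]
  ring

lemma subsetProb_nonneg (h0 : ∀ e, 0 ≤ p e) (h1 : ∀ e, p e ≤ 1) (Q : Finset E → Prop) :
    0 ≤ subsetProb p P Q := by
  classical
  exact sum_nonneg fun A _ => by split_ifs <;> simp [subsetWeight_nonneg h0 h1]

lemma subsetProb_mono (h0 : ∀ e, 0 ≤ p e) (h1 : ∀ e, p e ≤ 1) {Q R : Finset E → Prop}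
    (h : ∀ A ⊆ P, Q A → R A) : subsetProb p P Q ≤ subsetProb p P R := by
  classical
  refine sum_le_sum fun A hA => ?_
  have := subsetWeight_nonneg (P := P) h0 h1 A
  have := h A (mem_powerset.1 hA)
  split_ifs <;> simp_all

lemma subsetProb_congr {Q R : Finset E → Prop} (h : ∀ A ⊆ P, (Q A ↔ R A)) :
    subsetProb p P Q = subsetProb p P R := by
  classical
  exact sum_congr rfl fun A hA => if_congr (h A (mem_powerset.1 hA)) rfl rfl

lemma subsetProb_true : subsetProb p P (fun _ => True) = 1 := by
  simpa [subsetProb, subsetWeight] using (prod_add p (fun e => 1 - p e) P).symm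

lemma subsetProb_add_subsetProb_not (Q : Finset E → Prop) :
    subsetProb p P Q + subsetProb p P (fun A => ¬ Q A) = 1 := by
  classical
  rw [← subsetProb_true (p := p) (P := P), subsetProb, subsetProb, subsetProb,
    ← sum_add_distrib]
  exact sum_congr rfl fun A _ => by by_cases h : Q A <;> simp [h]

lemma subsetProb_or_le (h0 : ∀ e, 0 ≤ p e) (h1 : ∀ e, p e ≤ 1) (Q R : Finset E → Prop) :
    subsetProb p P (fun A => Q A ∨ R A) ≤ subsetProb p P Q + subsetProb p P R := by
  classical
  rw [subsetProb, subsetProb, subsetProb, ← sum_add_distrib]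
  refine sum_le_sum fun A _ => ?_
  have := subsetWeight_nonneg (P := P) h0 h1 A
  split_ifs <;> simp_all

lemma subsetProb_eq_empty : subsetProb p P (fun A => A = ∅) = ∏ e ∈ P, (1 - p e) := by
  rw [subsetProb, sum_eq_single_of_mem ∅ (empty_mem_powerset P)]
  · simp [subsetWeight]
  · exact fun A _ hA => if_neg hA

lemma subsetProb_nonempty :
    subsetProb p P (fun A => A.Nonempty) = 1 - ∏ e ∈ P, (1 - p e) := by
  have h := subsetProb_add_subsetProb_not (p := p) (P := P) Finset.Nonempty
  rw [subsetProb_congr fun A _ => not_nonempty_iff_eq_empty, subsetProb_eq_empty] at h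
  exact eq_sub_of_add_eq h

lemma subsetProb_inter_and_sdiff (hU : U ⊆ P) (Q R : Finset E → Prop) :
    subsetProb p P (fun A => Q (A ∩ U) ∧ R (A \ U)) =
      subsetProb p U Q * subsetProb p (P \ U) R := by
  classical
  rw [subsetProb, subsetProb, subsetProb, sum_mul_sum, ← sum_product']
  refine sum_nbij' (fun A => (A ∩ U, A \ U)) (fun x => x.1 ∪ x.2) ?_ ?_ ?_ ?_ ?_
  · intro A hA
    simp only [mem_powerset, mem_product] at hA ⊢
    exact ⟨inter_subset_right, sdiff_subset_sdiff hA le_rfl⟩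
  · intro x hx
    simp only [mem_powerset, mem_product] at hx ⊢
    exact union_subset (hx.1.trans hU) (hx.2.trans sdiff_subset)
  · intro A _
    ext e; grind
  · intro x hx
    simp only [mem_powerset, mem_product] at hx
    ext e <;> grind
  · intro A _
    dsimp only
    rw [ite_zero_mul_ite_zero, ← subsetWeight_eq_mul hU A]
    congr 1

lemma subsetProb_inter (hU : U ⊆ P) (Q : Finset E → Prop) :
    subsetProb p P (fun A => Q (A ∩ U)) = subsetProb p U Q := by
  simpa [subsetProb_true] using subsetProb_inter_and_sdiff (p := p) hU Q (fun _ => True)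

lemma subsetProb_forall_inter {ι : Type*} [DecidableEq ι] (S : Finset ι) (T : ι → Finset E)
    (Q : ι → Finset E → Prop) (hT : ∀ i ∈ S, T i ⊆ P)
    (hdisj : (S : Set ι).PairwiseDisjoint T) :
    subsetProb p P (fun A => ∀ i ∈ S, Q i (A ∩ T i)) = ∏ i ∈ S, subsetProb p (T i) (Q i) := by
  induction S using Finset.induction_on generalizing P with
  | empty => simpa using subsetProb_true
  | @insert j S hjS ih =>
    rw [coe_insert, Set.pairwiseDisjoint_insert_of_notMem (mem_coe.not.2 hjS)] at hdisj
    have hTj : T j ⊆ P := hT j (mem_insert_self j S)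
    have hsdiff : ∀ A, ∀ i ∈ S, (A \ T j) ∩ T i = A ∩ T i := fun A i hi =>
      (sdiff_inter_right_comm A (T j) (T i)).trans
        (sdiff_eq_self_of_disjoint ((disjoint_of_subset_left inter_subset_right
          (hdisj.2 i hi).symm)))
    calc subsetProb p P (fun A => ∀ i ∈ insert j S, Q i (A ∩ T i))
        = subsetProb p P (fun A => Q j (A ∩ T j) ∧ ∀ i ∈ S, Q i ((A \ T j) ∩ T i)) :=
          subsetProb_congr fun A _ => by
            rw [forall_mem_insert]
            exact and_congr_right' (forall₂_congr fun i hi => by rw [hsdiff A i hi])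
      _ = subsetProb p (T j) (Q j) * ∏ i ∈ S, subsetProb p (T i) (Q i) := by
          rw [subsetProb_inter_and_sdiff hTj (Q j) (fun C => ∀ i ∈ S, Q i (C ∩ T i)),
            ih (fun i hi => subset_sdiff.2 ⟨hT i (mem_insert_of_mem hi), (hdisj.2 i hi).symm⟩)
              hdisj.1]
      _ = _ := (prod_insert (f := fun i => subsetProb p (T i) (Q i)) hjS).symm

end RandomSubset

lemma one_sub_prod_one_sub_le_sum {ι : Type*} (s : Finset ι) {f : ι → ℝ}
    (h0 : ∀ i ∈ s, 0 ≤ f i) (h1 : ∀ i ∈ s, f i ≤ 1) :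
    1 - ∏ i ∈ s, (1 - f i) ≤ ∑ i ∈ s, f i := by
  classical
  induction s using Finset.induction_on with
  | empty => simp
  | @insert a s has ih =>
    have ha0 := h0 a (mem_insert_self a s)
    have hprod : ∏ i ∈ s, (1 - f i) ≤ 1 := prod_le_one
      (fun i hi => sub_nonneg.2 (h1 i (mem_insert_of_mem hi)))
      (fun i hi => sub_le_self 1 (h0 i (mem_insert_of_mem hi)))
    have := ih (fun i hi => h0 i (mem_insert_of_mem hi)) (fun i hi => h1 i (mem_insert_of_mem hi))
    rw [prod_insert has, sum_insert has]
    nlinarith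

lemma Fin.card_filter_le_val (n k : ℕ) : #{v : Fin n | k ≤ v.val} = n - k := by
  have := card_filter_add_card_filter_not (s := univ) (fun v : Fin n => v.val < k)
  simp only [not_lt, card_univ, Fintype.card_fin, Fin.card_filter_val_lt] at this
  omega

section IsolatedVertices

variable {n : ℕ}

def edgesWithin (S : Finset (Fin n)) : Finset (Fin n × Fin n) :=
  (pairs n).filter fun e => e.1 ∈ S ∧ e.2 ∈ S

def edgesLeaving (S : Finset (Fin n)) (v : Fin n) : Finset (Fin n × Fin n) :=
  (pairs n).filter fun e => (e.1 = v ∨ e.2 = v) ∧ (e.1 ∉ S ∨ e.2 ∉ S)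

lemma edgesWithin_subset_pairs (S : Finset (Fin n)) : edgesWithin S ⊆ pairs n :=
  filter_subset _ _

lemma edgesLeaving_subset_pairs (S : Finset (Fin n)) (v : Fin n) : edgesLeaving S v ⊆ pairs n :=
  filter_subset _ _

lemma card_edgesWithin_le (S : Finset (Fin n)) : #(edgesWithin S) ≤ #S ^ 2 := by
  calc #(edgesWithin S) ≤ #(S ×ˢ S) :=
        card_le_card fun e he => mem_product.2 (mem_filter.1 he).2
    _ = #S ^ 2 := by rw [card_product, sq]

lemma card_edgesLeaving_le (S : Finset (Fin n)) (v : Fin n) : #(edgesLeaving S v) ≤ 2 * n := by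
  have hsub : edgesLeaving S v ⊆ univ.image (fun w => (v, w)) ∪ univ.image (fun w => (w, v)) := by
    intro e he
    obtain ⟨-, h1 | h2, -⟩ := mem_filter.1 he
    · exact mem_union_left _ (mem_image.2 ⟨e.2, mem_univ _, by rw [← h1]⟩)
    · exact mem_union_right _ (mem_image.2 ⟨e.1, mem_univ _, by rw [← h2]⟩)
  calc #(edgesLeaving S v) ≤ n + n := (card_le_card hsub).trans <| (card_union_le _ _).trans <|
        add_le_add (card_image_le.trans (card_fin n).le) (card_image_le.trans (card_fin n).le)
    _ = 2 * n := (two_mul n).symm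

lemma pairwiseDisjoint_edgesLeaving (S : Finset (Fin n)) :
    (S : Set (Fin n)).PairwiseDisjoint (edgesLeaving S) := by
  intro v hv w hw hvw
  refine disjoint_left.2 fun e hev hew => ?_
  obtain ⟨-, hv', hout⟩ := mem_filter.1 hev
  obtain ⟨-, hw', -⟩ := mem_filter.1 hew
  rw [mem_coe] at hv hw
  rcases hv' with rfl | rfl <;> rcases hw' with rfl | rfl <;> grind

lemma exists_edge_within_or_forall_leaving (S : Finset (Fin n)) {A : Finset (Fin n × Fin n)}
    (hA : A ⊆ pairs n) (hcov : ∀ v ∈ S, ∃ e ∈ A, e.1 = v ∨ e.2 = v) :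
    (A ∩ edgesWithin S).Nonempty ∨ ∀ v ∈ S, (A ∩ edgesLeaving S v).Nonempty := by
  refine or_iff_not_imp_left.2 fun hwithin v hv => ?_
  obtain ⟨e, heA, hev⟩ := hcov v hv
  refine ⟨e, mem_inter.2 ⟨heA, mem_filter.2 ⟨hA heA, hev, ?_⟩⟩⟩
  by_contra! hboth
  exact hwithin ⟨e, mem_inter.2 ⟨heA, mem_filter.2 ⟨hA heA, hboth⟩⟩⟩

lemma subsetProb_forall_covered_le {p : Fin n × Fin n → ℝ} (h0 : ∀ e, 0 ≤ p e)
    (h1 : ∀ e, p e ≤ 1) (S : Finset (Fin n)) {q : ℝ} (hq0 : 0 ≤ q) (hq1 : q ≤ 1)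
    (hp : ∀ e ∈ pairs n, e.1 ∈ S ∨ e.2 ∈ S → p e ≤ q) :
    subsetProb p (pairs n) (fun A => ∀ v ∈ S, ∃ e ∈ A, e.1 = v ∨ e.2 = v) ≤
      #S ^ 2 * q + (1 - (1 - q) ^ (2 * n)) ^ #S := by
  have hwithin : 1 - ∏ e ∈ edgesWithin S, (1 - p e) ≤ #S ^ 2 * q :=
    calc 1 - ∏ e ∈ edgesWithin S, (1 - p e) ≤ ∑ e ∈ edgesWithin S, p e :=
          one_sub_prod_one_sub_le_sum _ (fun e _ => h0 e) (fun e _ => h1 e)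
      _ ≤ #(edgesWithin S) * q := by
          rw [← nsmul_eq_mul]
          refine sum_le_card_nsmul _ _ _ fun e he => ?_
          obtain ⟨hpair, h1S, -⟩ := mem_filter.1 he
          exact hp e hpair (Or.inl h1S)
      _ ≤ #S ^ 2 * q := by gcongr; exact_mod_cast card_edgesWithin_le S
  have hleaving : ∀ v ∈ S, 1 - ∏ e ∈ edgesLeaving S v, (1 - p e) ≤ 1 - (1 - q) ^ (2 * n) := by
    intro v hv
    refine sub_le_sub_left ?_ 1
    calc (1 - q) ^ (2 * n) ≤ (1 - q) ^ #(edgesLeaving S v) :=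
          pow_le_pow_of_le_one (sub_nonneg.2 hq1) (sub_le_self 1 hq0) (card_edgesLeaving_le S v)
      _ = ∏ _e ∈ edgesLeaving S v, (1 - q) := (prod_const _).symm
      _ ≤ ∏ e ∈ edgesLeaving S v, (1 - p e) := by
          refine prod_le_prod (fun _ _ => sub_nonneg.2 hq1) fun e he => sub_le_sub_left ?_ 1
          obtain ⟨hpair, hev, -⟩ := mem_filter.1 he
          exact hp e hpair (by rcases hev with h | h <;> simp [h, hv])
  have hleaving_nonneg : ∀ v ∈ S, 0 ≤ 1 - ∏ e ∈ edgesLeaving S v, (1 - p e) := fun v _ =>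
    sub_nonneg.2 (prod_le_one (fun e _ => sub_nonneg.2 (h1 e)) fun e _ => sub_le_self 1 (h0 e))
  calc subsetProb p (pairs n) (fun A => ∀ v ∈ S, ∃ e ∈ A, e.1 = v ∨ e.2 = v)
      ≤ subsetProb p (pairs n) (fun A => (A ∩ edgesWithin S).Nonempty ∨
          ∀ v ∈ S, (A ∩ edgesLeaving S v).Nonempty) :=
        subsetProb_mono h0 h1 fun A hA => exists_edge_within_or_forall_leaving S hA
    _ ≤ subsetProb p (pairs n) (fun A => (A ∩ edgesWithin S).Nonempty) +
          subsetProb p (pairs n) (fun A => ∀ v ∈ S, (A ∩ edgesLeaving S v).Nonempty) :=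
        subsetProb_or_le h0 h1 _ _
    _ = (1 - ∏ e ∈ edgesWithin S, (1 - p e)) +
          ∏ v ∈ S, (1 - ∏ e ∈ edgesLeaving S v, (1 - p e)) := by
        rw [subsetProb_inter (edgesWithin_subset_pairs S) Finset.Nonempty, subsetProb_nonempty,
          subsetProb_forall_inter S _ (fun _ => Finset.Nonempty)
            (fun v _ => edgesLeaving_subset_pairs S v) (pairwiseDisjoint_edgesLeaving S)]
        simp only [subsetProb_nonempty]
    _ ≤ #S ^ 2 * q + (1 - (1 - q) ^ (2 * n)) ^ #S := by
        rw [← prod_const]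
        exact add_le_add hwithin (prod_le_prod hleaving_nonneg hleaving)

end IsolatedVertices

section Asymptotics

open Real

lemma exp_neg_two_mul_le_one_sub {x : ℝ} (h0 : 0 ≤ x) (h1 : x ≤ 1 / 2) :
    exp (-(2 * x)) ≤ 1 - x :=
  calc exp (-(2 * x)) = (exp (2 * x))⁻¹ := exp_neg _
    _ ≤ (2 * x + 1)⁻¹ := inv_anti₀ (by positivity) (add_one_le_exp _)
    _ ≤ 1 - x := by
        rw [inv_le_iff_one_le_mul₀' (by positivity)]
        nlinarith

lemma one_sub_one_sub_pow_pow_le {n m : ℕ} {q r γ : ℝ} (hn : 0 < n) (hq0 : 0 ≤ q)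
    (hq : q ≤ 1 / 2) (hqr : q ≤ r * (log n / n)) (hm : (n : ℝ) ^ γ ≤ 2 * m) :
    (1 - (1 - q) ^ (2 * n)) ^ m ≤ exp (-(exp ((γ - 4 * r) * log n) / 2)) := by
  have hnR : (0 : ℝ) < n := Nat.cast_pos.2 hn
  set x := (1 - q) ^ (2 * n)
  have hx1 : x ≤ 1 := pow_le_one₀ (by linarith) (by linarith)
  have hx : exp (-4 * r * log n) ≤ x := by
    have hqn : q * n ≤ r * log n := by
      rw [mul_div_assoc', le_div_iff₀ hnR] at hqr; exact hqr
    calc exp (-4 * r * log n) ≤ exp (-(2 * q)) ^ (2 * n) := by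
          rw [← exp_nat_mul, exp_le_exp]; push_cast; nlinarith
      _ ≤ x := pow_le_pow_left₀ (exp_nonneg _) (exp_neg_two_mul_le_one_sub hq0 hq) _
  have hmx : exp ((γ - 4 * r) * log n) / 2 ≤ m * x := by
    have hsplit : exp ((γ - 4 * r) * log n) = (n : ℝ) ^ γ * exp (-4 * r * log n) := by
      rw [rpow_def_of_pos hnR, ← exp_add]; ring_nf
    calc exp ((γ - 4 * r) * log n) / 2 = (n : ℝ) ^ γ * exp (-4 * r * log n) / 2 := by
          rw [hsplit]
      _ ≤ 2 * m * x / 2 := by gcongr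
      _ = m * x := by ring
  calc (1 - x) ^ m ≤ exp (-x) ^ m := pow_le_pow_left₀ (by linarith) (one_sub_le_exp_neg x) m
    _ = exp (-(m * x)) := by rw [← exp_nat_mul]; ring_nf
    _ ≤ exp (-(exp ((γ - 4 * r) * log n) / 2)) := by rw [exp_le_exp]; linarith

variable {q r : ℕ → ℝ} {m : ℕ → ℕ} {γ : ℝ}

lemma tendsto_cast_sq_mul_zero (hγ : γ < 1 / 2) (hr : Tendsto r atTop (nhds 0))
    (hq0 : ∀ n, 0 ≤ q n) (hqr : ∀ᶠ n : ℕ in atTop, q n ≤ r n * (log n / n))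
    (hm : ∀ n, (m n : ℝ) ≤ (n : ℝ) ^ γ) :
    Tendsto (fun n => (m n : ℝ) ^ 2 * q n) atTop (nhds 0) := by
  have hlog : Tendsto (fun n : ℕ => log n / (n : ℝ) ^ (1 - 2 * γ)) atTop (nhds 0) :=
    ((isLittleO_log_rpow_atTop (by linarith)).tendsto_div_nhds_zero).comp
      tendsto_natCast_atTop_atTop
  refine squeeze_zero' (Eventually.of_forall fun n => by have := hq0 n; positivity) ?_
    (by simpa using hr.mul hlog)
  filter_upwards [hqr, eventually_gt_atTop 0] with n hqn hn
  have hnR : (0 : ℝ) < n := Nat.cast_pos.2 hn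
  have hm2 : (m n : ℝ) ^ 2 ≤ (n : ℝ) ^ (2 * γ) := by
    rw [mul_comm, rpow_mul hnR.le, rpow_two]; gcongr; exact hm n
  calc (m n : ℝ) ^ 2 * q n ≤ (n : ℝ) ^ (2 * γ) * (r n * (log n / n)) :=
        mul_le_mul hm2 hqn (hq0 n) (by positivity)
    _ = r n * (log n / (n : ℝ) ^ (1 - 2 * γ)) := by
        rw [rpow_sub hnR, rpow_one]; field_simp

lemma tendsto_one_sub_one_sub_pow_pow_zero (hγ : 0 < γ) (hr : Tendsto r atTop (nhds 0))
    (hq0 : ∀ n, 0 ≤ q n) (hqr : ∀ᶠ n : ℕ in atTop, q n ≤ r n * (log n / n))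
    (hm : ∀ᶠ n : ℕ in atTop, (n : ℝ) ^ γ ≤ 2 * m n) :
    Tendsto (fun n => (1 - (1 - q n) ^ (2 * n)) ^ m n) atTop (nhds 0) := by
  have hlog : Tendsto (fun n : ℕ => log n / n) atTop (nhds 0) := by
    simpa [Function.comp_def] using
      ((isLittleO_log_rpow_atTop one_pos).tendsto_div_nhds_zero).comp tendsto_natCast_atTop_atTop
  have hq : ∀ᶠ n : ℕ in atTop, q n ≤ 1 / 2 := by
    filter_upwards [hqr, (by simpa using hr.mul hlog :
      Tendsto (fun n : ℕ => r n * (log n / n)) atTop (nhds 0)).eventually_le_const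
        (by norm_num : (0 : ℝ) < 1 / 2)] with n h1 h2 using h1.trans h2
  have hexp : Tendsto (fun n : ℕ => (γ - 4 * r n) * log n) atTop atTop :=
    Tendsto.pos_mul_atTop (C := γ) hγ (by simpa using (hr.const_mul 4).const_sub γ)
      (tendsto_log_atTop.comp tendsto_natCast_atTop_atTop)
  refine squeeze_zero' ?_ ?_ (tendsto_exp_atBot.comp
    (tendsto_neg_atTop_atBot.comp ((tendsto_exp_atTop.comp hexp).atTop_div_const two_pos)))
  · filter_upwards [hq] with n hqn
    exact pow_nonneg (sub_nonneg.2 (pow_le_one₀ (by linarith [hq0 n]) (by linarith [hq0 n]))) _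
  · filter_upwards [hqr, hq, hm, eventually_gt_atTop 0] with n hqrn hqn hmn hn
    exact one_sub_one_sub_pow_pow_le hn (hq0 n) hqn hqrn hmn

end Asymptotics

section BiValuedChungLu

noncomputable def biChungLuProb (n1 n2 d1 d2 : ℕ) {n : ℕ} (e : Fin n × Fin n) : ℝ :=
  min 1 (((bideg n1 d1 d2 e.1 * bideg n1 d1 d2 e.2 : ℕ) : ℝ) / ((n1 * d1 + n2 * d2 : ℕ) : ℝ))

variable {n1 n2 d1 d2 n : ℕ}

lemma biChungLuProb_nonneg (e : Fin n × Fin n) : 0 ≤ biChungLuProb n1 n2 d1 d2 e :=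
  le_min zero_le_one (by positivity)

lemma biChungLuProb_le_one (e : Fin n × Fin n) : biChungLuProb n1 n2 d1 d2 e ≤ 1 :=
  min_le_left _ _

lemma bideg_mul_bideg_le (h : d2 ≤ d1) {u v : Fin n} (huv : n1 ≤ u.val ∨ n1 ≤ v.val) :
    bideg n1 d1 d2 u * bideg n1 d1 d2 v ≤ d1 * d2 := by
  have hle : ∀ w : Fin n, bideg n1 d1 d2 w ≤ d1 := fun w => by unfold bideg; split_ifs <;> omega
  rcases huv with hu | hv
  · rw [show bideg n1 d1 d2 u = d2 from if_neg (not_lt.2 hu), mul_comm d1]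
    exact Nat.mul_le_mul_left _ (hle v)
  · rw [show bideg n1 d1 d2 v = d2 from if_neg (not_lt.2 hv)]
    exact Nat.mul_le_mul_right _ (hle u)

lemma biChungLuProb_le (h : d2 ≤ d1) {e : Fin n × Fin n} (he : n1 ≤ e.1.val ∨ n1 ≤ e.2.val) :
    biChungLuProb n1 n2 d1 d2 e ≤
      min 1 (((d1 * d2 : ℕ) : ℝ) / ((n1 * d1 + n2 * d2 : ℕ) : ℝ)) :=
  min_le_min_left _ <| div_le_div_of_nonneg_right
    (Nat.cast_le.2 (bideg_mul_bideg_le h he)) (Nat.cast_nonneg _)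

lemma subsetProb_biChungLuProb_forall_covered_le (hn : n1 + n2 = n) (hd : d2 ≤ d1) {m : ℕ}
    (hm : m ≤ n2) :
    subsetProb (biChungLuProb n1 n2 d1 d2) (pairs n)
        (fun A => ∀ v : Fin n, n1 ≤ v.val → ∃ e ∈ A, e.1 = v ∨ e.2 = v) ≤
      (m : ℝ) ^ 2 * min 1 (((d1 * d2 : ℕ) : ℝ) / ((n1 * d1 + n2 * d2 : ℕ) : ℝ)) +
        (1 - (1 - min 1 (((d1 * d2 : ℕ) : ℝ) / ((n1 * d1 + n2 * d2 : ℕ) : ℝ))) ^ (2 * n)) ^ m := by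
  have hmU : m ≤ #{v : Fin n | n1 ≤ v.val} := by
    rw [Fin.card_filter_le_val]; omega
  obtain ⟨S, hSU, rfl⟩ := exists_subset_card_eq hmU
  have hSmem : ∀ v ∈ S, n1 ≤ v.val := fun v hv => (mem_filter.1 (hSU hv)).2
  calc _ ≤ subsetProb (biChungLuProb n1 n2 d1 d2) (pairs n)
        (fun A => ∀ v ∈ S, ∃ e ∈ A, e.1 = v ∨ e.2 = v) :=
        subsetProb_mono biChungLuProb_nonneg biChungLuProb_le_one
          fun A _ hA v hv => hA v (hSmem v hv)
    _ ≤ _ := subsetProb_forall_covered_le biChungLuProb_nonneg biChungLuProb_le_one S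
        (le_min zero_le_one (by positivity)) (min_le_left _ _)
        fun e _ he => biChungLuProb_le hd (he.imp (hSmem _) (hSmem _))

end BiValuedChungLu

theorem tendsto_subsetProb_forall_covered_zero (n1 n2 d1 d2 : ℕ → ℕ)
    (hn : ∀ n, n1 n + n2 n = n) (hd : ∀ n, d2 n ≤ d1 n) {c : ℝ} (hc : 0 < c)
    (hn2 : ∀ᶠ n : ℕ in atTop, (n : ℝ) ^ c ≤ (n2 n : ℝ))
    (hsmall : Tendsto (fun n =>
        (((d1 n * d2 n : ℕ) : ℝ) / ((n1 n * d1 n + n2 n * d2 n : ℕ) : ℝ)) /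
          (Real.log n / (n : ℝ))) atTop (nhds 0)) :
    Tendsto (fun n => subsetProb (biChungLuProb (n1 n) (n2 n) (d1 n) (d2 n)) (pairs n)
        (fun A => ∀ v : Fin n, n1 n ≤ v.val → ∃ e ∈ A, e.1 = v ∨ e.2 = v)) atTop (nhds 0) := by
  set γ := min c (1 / 4)
  have hγ0 : 0 < γ := lt_min hc (by norm_num)
  set q : ℕ → ℝ := fun n => min 1 (((d1 n * d2 n : ℕ) : ℝ) / ((n1 n * d1 n + n2 n * d2 n : ℕ) : ℝ))
  set m : ℕ → ℕ := fun n => ⌊(n : ℝ) ^ γ⌋₊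
  have hq0 : ∀ n, 0 ≤ q n := fun n => le_min zero_le_one (by positivity)
  have hqr : ∀ᶠ n : ℕ in atTop, q n ≤
      (((d1 n * d2 n : ℕ) : ℝ) / ((n1 n * d1 n + n2 n * d2 n : ℕ) : ℝ)) /
        (Real.log n / n) * (Real.log n / n) := by
    filter_upwards [eventually_gt_atTop 1] with n hn
    rw [div_mul_cancel₀ _ (div_pos (Real.log_pos (by exact_mod_cast hn)) (by positivity)).ne']
    exact min_le_right _ _
  have hm_le : ∀ n, (m n : ℝ) ≤ (n : ℝ) ^ γ := fun n => Nat.floor_le (by positivity)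
  have hm_ge : ∀ᶠ n : ℕ in atTop, (n : ℝ) ^ γ ≤ 2 * m n := by
    filter_upwards [eventually_gt_atTop 0] with n hn
    have h1 : 1 ≤ (n : ℝ) ^ γ := Real.one_le_rpow (by exact_mod_cast hn) hγ0.le
    have h2 := Nat.lt_floor_add_one ((n : ℝ) ^ γ)
    have h3 : (1 : ℝ) ≤ m n := by exact_mod_cast Nat.floor_pos.2 h1
    linarith
  have hbound : ∀ᶠ n : ℕ in atTop,
      subsetProb (biChungLuProb (n1 n) (n2 n) (d1 n) (d2 n)) (pairs n)
        (fun A => ∀ v : Fin n, n1 n ≤ v.val → ∃ e ∈ A, e.1 = v ∨ e.2 = v) ≤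
      (m n : ℝ) ^ 2 * q n + (1 - (1 - q n) ^ (2 * n)) ^ m n := by
    filter_upwards [hn2, eventually_gt_atTop 0] with n hn2n hnpos
    refine subsetProb_biChungLuProb_forall_covered_le (hn n) (hd n) ?_
    exact_mod_cast (hm_le n).trans ((Real.rpow_le_rpow_of_exponent_le
      (by exact_mod_cast hnpos) (min_le_left _ _)).trans hn2n)
  refine squeeze_zero' (Eventually.of_forall fun n =>
    subsetProb_nonneg biChungLuProb_nonneg biChungLuProb_le_one _) hbound ?_
  simpa using (tendsto_cast_sq_mul_zero (by norm_num [γ]) hsmall hq0 hqr hm_le).add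
    (tendsto_one_sub_one_sub_pow_pow_zero hγ0 hsmall hq0 hqr hm_ge)

lemma HasPM.exists_mem_incident {n : ℕ} {A : Finset (Fin n × Fin n)} (h : HasPM A) (v : Fin n) :
    ∃ e ∈ A, e.1 = v ∨ e.2 = v := by
  obtain ⟨M, hMA, -, hM⟩ := h
  obtain ⟨e, ⟨heM, hv⟩, -⟩ := hM v
  exact ⟨e, hMA heM, hv.imp Eq.symm Eq.symm⟩

lemma subsetProb_exists_isolated {n k : ℕ} (p : Fin n × Fin n → ℝ) :
    subsetProb p (pairs n) (fun A => ∃ v : Fin n, k ≤ v.val ∧ ∀ e ∈ A, e.1 ≠ v ∧ e.2 ≠ v) =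
      1 - subsetProb p (pairs n)
        (fun A => ∀ v : Fin n, k ≤ v.val → ∃ e ∈ A, e.1 = v ∨ e.2 = v) := by
  rw [← subsetProb_add_subsetProb_not (fun A : Finset (Fin n × Fin n) =>
    ∀ v : Fin n, k ≤ v.val → ∃ e ∈ A, e.1 = v ∨ e.2 = v), add_sub_cancel_left]
  exact subsetProb_congr fun A _ => by push Not; rfl

lemma probGraph_eq_subsetProb (n : ℕ) (p : Fin n × Fin n → ℝ)
    (Q : Finset (Fin n × Fin n) → Prop) : probGraph n p Q = subsetProb p (pairs n) Q :=
  rfl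

theorem stmt10_general (n1 n2 d1 d2 : ℕ → ℕ) (hn : ∀ n, n1 n + n2 n = n)
    (hbv : ∀ n, d2 n < d1 n)
    (c : ℝ) (hc : 0 < c)
    (hn2 : ∀ᶠ n : ℕ in atTop, ((n : ℝ)) ^ c ≤ (n2 n : ℝ))
    (hsmall : Tendsto (fun n =>
        (((d1 n * d2 n : ℕ) : ℝ) / ((n1 n * d1 n + n2 n * d2 n : ℕ) : ℝ)) /
          (Real.log n / (n : ℝ))) atTop (nhds 0)) :
    Tendsto (fun n => probGraph n
        (fun e => min 1 (((bideg (n1 n) (d1 n) (d2 n) e.1 *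
              bideg (n1 n) (d1 n) (d2 n) e.2 : ℕ) : ℝ) /
            ((n1 n * d1 n + n2 n * d2 n : ℕ) : ℝ)))
        (fun A => ∃ v : Fin n, n1 n ≤ v.val ∧ ∀ e ∈ A, e.1 ≠ v ∧ e.2 ≠ v))
      atTop (nhds 1)
    ∧ Tendsto (fun n => probGraph n
        (fun e => min 1 (((bideg (n1 n) (d1 n) (d2 n) e.1 *
              bideg (n1 n) (d1 n) (d2 n) e.2 : ℕ) : ℝ) /
            ((n1 n * d1 n + n2 n * d2 n : ℕ) : ℝ)))
        HasPM)
      atTop (nhds 0) := by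
  simp only [probGraph_eq_subsetProb]
  have hcovered := tendsto_subsetProb_forall_covered_zero n1 n2 d1 d2 hn (fun n => (hbv n).le)
    hc hn2 hsmall
  refine ⟨?_, squeeze_zero (fun n => subsetProb_nonneg biChungLuProb_nonneg
    biChungLuProb_le_one _) (fun n => subsetProb_mono biChungLuProb_nonneg biChungLuProb_le_one
      fun A _ hA v _ => hA.exists_mem_incident v) hcovered⟩
  have hone := hcovered.const_sub 1
  rw [sub_zero] at hone
  exact hone.congr fun n => (subsetProb_exists_isolated _).symm

/-- 0-statement for bi-valued Chung–Lu (family `D₁`): if `n1 ≥ n2`, `n2 ≥ n^c` for a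
fixed `c > 0`, and `d1·d2/‖d‖₁ = o(log n / n)`, then a.a.s. `G_CL(n,d)` has an isolated
vertex in `U₂`, and consequently a.a.s. it has no perfect matching. -/
theorem stmt10 (n1 n2 d1 d2 : ℕ → ℕ) (hn : ∀ n, n1 n + n2 n = n)
    (hbv : ∀ n, d2 n < d1 n) (hd2 : ∀ n, 1 ≤ d2 n)
    (hord : ∀ n, n2 n ≤ n1 n)
    (c : ℝ) (hc : 0 < c)
    (hn2 : ∀ᶠ n : ℕ in atTop, ((n : ℝ)) ^ c ≤ (n2 n : ℝ))
    (hsmall : Tendsto (fun n =>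
        (((d1 n * d2 n : ℕ) : ℝ) / ((n1 n * d1 n + n2 n * d2 n : ℕ) : ℝ)) /
          (Real.log n / (n : ℝ))) atTop (nhds 0)) :
    Tendsto (fun n => probGraph n
        (fun e => min 1 (((bideg (n1 n) (d1 n) (d2 n) e.1 *
              bideg (n1 n) (d1 n) (d2 n) e.2 : ℕ) : ℝ) /
            ((n1 n * d1 n + n2 n * d2 n : ℕ) : ℝ)))
        (fun A => ∃ v : Fin n, n1 n ≤ v.val ∧ ∀ e ∈ A, e.1 ≠ v ∧ e.2 ≠ v))
      atTop (nhds 1)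
    ∧ Tendsto (fun n => probGraph n
        (fun e => min 1 (((bideg (n1 n) (d1 n) (d2 n) e.1 *
              bideg (n1 n) (d1 n) (d2 n) e.2 : ℕ) : ℝ) /
            ((n1 n * d1 n + n2 n * d2 n : ℕ) : ℝ)))
        HasPM)
      atTop (nhds 0) :=
  stmt10_general n1 n2 d1 d2 hn hbv c hc hn2 hsmall
end

section
/- Let d = d(n) be a sequence of bi-valued degree sequences on [n] (value d_1 with multiplicity n_1 and value d_2 < d_1 with multiplicity n_2 = n − n_1) such that n_1 ≤ n^δ for some fixed constant δ < 1. If d_2²/‖d‖_1 = o(log n / n), then a.a.s. the number of vertices of U_2 having no neighbour in U_2 in the Chung–Lu random graph G_CL(n,d) exceeds n_1; consequently a.a.s. G_CL(n,d) has no perfect matching. -/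
/-!
Let `X` count the vertices of `U₂` with no neighbour in `U₂`. Inside `U₂` the Chung–Lu graph
is `G(N, q)` with `N = n - n₁` and `q = min(1, d₂²/‖d‖₁)`, so `E X = N (1 - q)^(N-1) =: μ`, and
since two stars inside `U₂` share exactly one edge, `Var X ≤ μ + 2 q μ²` once `q ≤ 1/2`.
The hypothesis `q n = o(log n)` gives `μ ≥ n^θ / 2` for some `θ > δ`, hence `n₁ ≤ μ / 2`
eventually, and Chebyshev's inequality bounds `P(X ≤ n₁)` by `4/μ + 8 q → 0`. A perfect matching
sends the vertices counted by `X` injectively to partners in `U₁`, forcing `X ≤ n₁`.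
-/

open Finset Filter

theorem sum_filter_le_le_variance_div {Ω : Type*} {s : Finset Ω} {w : Ω → ℝ}
    (hw0 : ∀ ω ∈ s, 0 ≤ w ω) (hw1 : ∑ ω ∈ s, w ω = 1) (X : Ω → ℝ) {a : ℝ}
    (ha : a < ∑ ω ∈ s, w ω * X ω) :
    ∑ ω ∈ s with X ω ≤ a, w ω ≤
      (∑ ω ∈ s, w ω * X ω ^ 2 - (∑ ω ∈ s, w ω * X ω) ^ 2) / (∑ ω ∈ s, w ω * X ω - a) ^ 2 := by
  set μ := ∑ ω ∈ s, w ω * X ω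
  have hvar : ∑ ω ∈ s, w ω * (X ω - μ) ^ 2 = ∑ ω ∈ s, w ω * X ω ^ 2 - μ ^ 2 := by
    have hexpand : ∀ ω, w ω * (X ω - μ) ^ 2 = w ω * X ω ^ 2 - 2 * μ * (w ω * X ω) + μ ^ 2 * w ω :=
      fun ω => by ring
    simp only [hexpand, sum_add_distrib, sum_sub_distrib, ← mul_sum, hw1]
    ring
  rw [le_div_iff₀ (by nlinarith), ← hvar, sum_mul]
  calc ∑ ω ∈ s with X ω ≤ a, w ω * (μ - a) ^ 2
      ≤ ∑ ω ∈ s with X ω ≤ a, w ω * (X ω - μ) ^ 2 := by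
        refine sum_le_sum fun ω hω => ?_
        obtain ⟨hωs, hX⟩ := mem_filter.1 hω
        exact mul_le_mul_of_nonneg_left (by nlinarith) (hw0 ω hωs)
    _ ≤ ∑ ω ∈ s, w ω * (X ω - μ) ^ 2 :=
        sum_le_sum_of_subset_of_nonneg (filter_subset _ _) fun ω hω _ =>
          mul_nonneg (hw0 ω hω) (sq_nonneg _)

section BernoulliSubset

variable {ι κ : Type*} [DecidableEq ι]

def bernoulliWeight (S : Finset ι) (p : ι → ℝ) (A : Finset ι) : ℝ :=
  (∏ e ∈ A, p e) * ∏ e ∈ S \ A, (1 - p e)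

theorem sum_powerset_bernoulliWeight (S : Finset ι) (p : ι → ℝ) :
    ∑ A ∈ S.powerset, bernoulliWeight S p A = 1 := by
  simp [bernoulliWeight, ← prod_add]

theorem bernoulliWeight_nonneg {S : Finset ι} {p : ι → ℝ} (hp0 : ∀ e, 0 ≤ p e)
    (hp1 : ∀ e, p e ≤ 1) (A : Finset ι) : 0 ≤ bernoulliWeight S p A :=
  mul_nonneg (prod_nonneg fun e _ => hp0 e) (prod_nonneg fun e _ => sub_nonneg.2 (hp1 e))

theorem sum_powerset_filter_disjoint_bernoulliWeight {S T : Finset ι} (p : ι → ℝ)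
    (hT : T ⊆ S) :
    ∑ A ∈ S.powerset with Disjoint A T, bernoulliWeight S p A = ∏ e ∈ T, (1 - p e) := by
  have hfilter : {A ∈ S.powerset | Disjoint A T} = (S \ T).powerset := by
    ext A
    simp [subset_sdiff]
  have hsplit : ∀ A ∈ (S \ T).powerset,
      bernoulliWeight S p A = (∏ e ∈ T, (1 - p e)) * bernoulliWeight (S \ T) p A := by
    intro A hA
    have hcompl : S \ A = T ∪ (S \ T) \ A := by
      ext e
      have h1 : e ∈ T → e ∈ S := fun h => hT h
      have h2 : e ∈ A → e ∈ S ∧ e ∉ T := fun h => Finset.mem_sdiff.1 (mem_powerset.1 hA h)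
      simp only [Finset.mem_sdiff, Finset.mem_union]
      tauto
    rw [bernoulliWeight, bernoulliWeight, hcompl,
      prod_union (disjoint_sdiff.mono_right sdiff_subset)]
    ring
  rw [hfilter, sum_congr rfl hsplit, ← mul_sum, sum_powerset_bernoulliWeight, mul_one]

theorem sum_bernoulliWeight_mul_card_filter_disjoint {S : Finset ι} (p : ι → ℝ)
    {T : κ → Finset ι} (hT : ∀ v, T v ⊆ S) (U : Finset κ) :
    ∑ A ∈ S.powerset, bernoulliWeight S p A * (#{v ∈ U | Disjoint A (T v)} : ℝ) =
      ∑ v ∈ U, ∏ e ∈ T v, (1 - p e) := by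
  simp only [card_filter, Nat.cast_sum, Nat.cast_ite, Nat.cast_one, Nat.cast_zero, mul_sum]
  rw [sum_comm]
  refine sum_congr rfl fun v _ => ?_
  rw [← sum_powerset_filter_disjoint_bernoulliWeight p (hT v), sum_filter]
  exact sum_congr rfl fun A _ => by split_ifs <;> simp

theorem sum_bernoulliWeight_mul_card_filter_disjoint_sq {S : Finset ι} (p : ι → ℝ)
    {T : κ → Finset ι} (hT : ∀ v, T v ⊆ S) (U : Finset κ) :
    ∑ A ∈ S.powerset, bernoulliWeight S p A * (#{v ∈ U | Disjoint A (T v)} : ℝ) ^ 2 =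
      ∑ u ∈ U, ∑ v ∈ U, ∏ e ∈ T u ∪ T v, (1 - p e) := by
  have hsq : ∀ A : Finset ι, (#{v ∈ U | Disjoint A (T v)} : ℝ) ^ 2 =
      #{x ∈ U ×ˢ U | Disjoint A (T x.1 ∪ T x.2)} := by
    intro A
    rw [sq, ← Nat.cast_mul, ← card_product, ← filter_product]
    simp only [disjoint_union_right]
  simp only [hsq]
  rw [sum_bernoulliWeight_mul_card_filter_disjoint p
    (fun x : κ × κ => union_subset (hT x.1) (hT x.2)), sum_product]

end BernoulliSubset

theorem probGraph_eq_sum_filter (n : ℕ) (p : Fin n × Fin n → ℝ)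
    (Q : Finset (Fin n × Fin n) → Prop) [DecidablePred Q] :
    probGraph n p Q = ∑ A ∈ (pairs n).powerset with Q A, bernoulliWeight (pairs n) p A := by
  rw [sum_filter, probGraph]
  congr!

theorem probGraph_nonneg {n : ℕ} {p : Fin n × Fin n → ℝ} (hp0 : ∀ e, 0 ≤ p e)
    (hp1 : ∀ e, p e ≤ 1) (Q : Finset (Fin n × Fin n) → Prop) : 0 ≤ probGraph n p Q := by
  classical
  rw [probGraph_eq_sum_filter]
  exact sum_nonneg fun A _ => bernoulliWeight_nonneg hp0 hp1 A

theorem probGraph_eq_one_sub_not {n : ℕ} (p : Fin n × Fin n → ℝ)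
    (Q : Finset (Fin n × Fin n) → Prop) :
    probGraph n p Q = 1 - probGraph n p (fun A => ¬ Q A) := by
  classical
  rw [eq_sub_iff_add_eq, probGraph_eq_sum_filter, probGraph_eq_sum_filter,
    sum_filter_add_sum_filter_not, sum_powerset_bernoulliWeight]

theorem probGraph_mono {n : ℕ} {p : Fin n × Fin n → ℝ} (hp0 : ∀ e, 0 ≤ p e)
    (hp1 : ∀ e, p e ≤ 1) {Q R : Finset (Fin n × Fin n) → Prop}
    (h : ∀ A ⊆ pairs n, Q A → R A) :
    probGraph n p Q ≤ probGraph n p R := by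
  classical
  rw [probGraph_eq_sum_filter, probGraph_eq_sum_filter]
  refine sum_le_sum_of_subset_of_nonneg (fun A => ?_) fun A _ _ => bernoulliWeight_nonneg hp0 hp1 A
  simp only [mem_filter, mem_powerset]
  exact fun ⟨hA, hQ⟩ => ⟨hA, h A hA hQ⟩

noncomputable def chungLuProb (n1 d1 d2 D : ℕ) {n : ℕ} (e : Fin n × Fin n) : ℝ :=
  min 1 (((bideg n1 d1 d2 e.1 * bideg n1 d1 d2 e.2 : ℕ) : ℝ) / (D : ℝ))

noncomputable def chungLuProbU2 (d2 D : ℕ) : ℝ := min 1 (((d2 * d2 : ℕ) : ℝ) / (D : ℝ))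

theorem chungLuProb_nonneg (n1 d1 d2 D : ℕ) {n : ℕ} (e : Fin n × Fin n) :
    0 ≤ chungLuProb n1 d1 d2 D e :=
  le_min zero_le_one (by positivity)

theorem chungLuProb_le_one (n1 d1 d2 D : ℕ) {n : ℕ} (e : Fin n × Fin n) :
    chungLuProb n1 d1 d2 D e ≤ 1 :=
  min_le_left _ _

theorem chungLuProbU2_nonneg (d2 D : ℕ) : 0 ≤ chungLuProbU2 d2 D :=
  le_min zero_le_one (by positivity)

def U2 (n n1 : ℕ) : Finset (Fin n) := univ.filter fun v => n1 ≤ v.val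

@[simp]
theorem mem_U2 {n n1 : ℕ} {v : Fin n} : v ∈ U2 n n1 ↔ n1 ≤ v.val := by
  simp [U2]

theorem card_U2 (n n1 : ℕ) : #(U2 n n1) = n - n1 := by
  rw [← card_map Fin.valEmbedding, ← Nat.card_Ico]
  congr 1
  ext m
  simp only [Finset.mem_map, mem_U2, Fin.valEmbedding_apply, mem_Ico]
  exact ⟨fun ⟨v, hv, hvm⟩ => hvm ▸ ⟨hv, v.isLt⟩, fun ⟨h1, h2⟩ => ⟨⟨m, h2⟩, h1, rfl⟩⟩

theorem chungLuProb_of_mem_U2 {n n1 d1 d2 D : ℕ} {e : Fin n × Fin n}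
    (h1 : e.1 ∈ U2 n n1) (h2 : e.2 ∈ U2 n n1) :
    chungLuProb n1 d1 d2 D e = chungLuProbU2 d2 D := by
  rw [mem_U2] at h1 h2
  simp only [chungLuProb, chungLuProbU2, bideg, if_neg h1.not_gt, if_neg h2.not_gt]

theorem prod_one_sub_chungLuProb {n n1 d1 d2 D : ℕ} {T : Finset (Fin n × Fin n)}
    (hT : ∀ e ∈ T, e.1 ∈ U2 n n1 ∧ e.2 ∈ U2 n n1) :
    ∏ e ∈ T, (1 - chungLuProb n1 d1 d2 D e) = (1 - chungLuProbU2 d2 D) ^ #T := by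
  rw [← prod_const]
  exact prod_congr rfl fun e he => by rw [chungLuProb_of_mem_U2 (hT e he).1 (hT e he).2]

def u2Star (n1 : ℕ) {n : ℕ} (v : Fin n) : Finset (Fin n × Fin n) :=
  (pairs n).filter fun e => (e.1 = v ∧ n1 ≤ e.2.val) ∨ (e.2 = v ∧ n1 ≤ e.1.val)

theorem u2Star_subset_pairs (n1 : ℕ) {n : ℕ} (v : Fin n) : u2Star n1 v ⊆ pairs n :=
  filter_subset _ _

theorem mem_U2_of_mem_u2Star {n n1 : ℕ} {v : Fin n} (hv : v ∈ U2 n n1)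
    {e : Fin n × Fin n} (he : e ∈ u2Star n1 v) : e.1 ∈ U2 n n1 ∧ e.2 ∈ U2 n n1 := by
  simp only [mem_U2] at hv ⊢
  obtain ⟨-, ⟨h1, h2⟩ | ⟨h1, h2⟩⟩ := mem_filter.1 he
  · exact ⟨h1 ▸ hv, h2⟩
  · exact ⟨h2, h1 ▸ hv⟩

theorem u2Star_eq_image {n n1 : ℕ} (v : Fin n) :
    u2Star n1 v = ((U2 n n1).erase v).image fun u => if u < v then (u, v) else (v, u) := by
  ext ⟨a, b⟩
  simp only [u2Star, pairs, mem_filter, mem_univ, true_and, mem_image, mem_erase, mem_U2]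
  constructor
  · rintro ⟨hab, ⟨rfl, hb⟩ | ⟨rfl, ha⟩⟩
    · exact ⟨b, ⟨hab.ne', hb⟩, by simp [hab.not_gt]⟩
    · exact ⟨a, ⟨hab.ne, ha⟩, by simp [hab]⟩
  · rintro ⟨u, ⟨huv, hu⟩, hval⟩
    rcases lt_or_gt_of_ne huv with h | h
    · simp only [h, if_true, Prod.mk.injEq] at hval
      obtain ⟨rfl, rfl⟩ := hval
      exact ⟨h, Or.inr ⟨rfl, hu⟩⟩
    · simp only [h.not_gt, if_false, Prod.mk.injEq] at hval
      obtain ⟨rfl, rfl⟩ := hval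
      exact ⟨h, Or.inl ⟨rfl, hu⟩⟩

theorem card_u2Star {n n1 : ℕ} {v : Fin n} (hv : v ∈ U2 n n1) :
    #(u2Star n1 v) = n - n1 - 1 := by
  rw [u2Star_eq_image, card_image_of_injOn, card_erase_of_mem hv, card_U2]
  intro u hu u' hu' h
  have huv := (mem_erase.1 hu).1
  have hu'v := (mem_erase.1 hu').1
  by_cases h1 : u < v <;> by_cases h2 : u' < v <;>
    simp only [h1, h2, if_true, if_false, Prod.mk.injEq] at h <;> tauto

theorem u2Star_inter_u2Star {n n1 : ℕ} {u v : Fin n} (hu : u ∈ U2 n n1) (hv : v ∈ U2 n n1)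
    (huv : u < v) : u2Star n1 u ∩ u2Star n1 v = {(u, v)} := by
  rw [mem_U2] at hu hv
  ext ⟨a, b⟩
  simp only [mem_inter, u2Star, pairs, mem_filter, mem_univ, true_and, mem_singleton,
    Prod.mk.injEq]
  constructor
  · rintro ⟨⟨hab, h⟩, -, h'⟩
    rcases h with ⟨rfl, -⟩ | ⟨rfl, -⟩ <;> rcases h' with ⟨rfl, -⟩ | ⟨rfl, -⟩ <;>
      first | exact absurd huv (lt_irrefl _) | exact ⟨rfl, rfl⟩ | exact absurd hab huv.not_gt
  · rintro ⟨rfl, rfl⟩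
    exact ⟨⟨huv, Or.inl ⟨rfl, hv⟩⟩, huv, Or.inr ⟨rfl, hu⟩⟩

theorem card_u2Star_union {n n1 : ℕ} {u v : Fin n} (hu : u ∈ U2 n n1) (hv : v ∈ U2 n n1)
    (huv : u ≠ v) : #(u2Star n1 u ∪ u2Star n1 v) + 1 = 2 * (n - n1 - 1) := by
  have h := card_union_add_card_inter (u2Star n1 u) (u2Star n1 v)
  rcases lt_or_gt_of_ne huv with hlt | hlt
  · rw [u2Star_inter_u2Star hu hv hlt, card_singleton, card_u2Star hu, card_u2Star hv] at h
    omega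
  · rw [inter_comm, u2Star_inter_u2Star hv hu hlt, card_singleton, card_u2Star hu,
      card_u2Star hv] at h
    omega

def isolatedU2 (n1 : ℕ) {n : ℕ} (A : Finset (Fin n × Fin n)) : Finset (Fin n) :=
  univ.filter fun v => n1 ≤ v.val ∧
    ∀ e ∈ A, ¬(e.1 = v ∧ n1 ≤ e.2.val) ∧ ¬(e.2 = v ∧ n1 ≤ e.1.val)

theorem isolatedU2_eq_filter_disjoint {n n1 : ℕ} {A : Finset (Fin n × Fin n)}
    (hA : A ⊆ pairs n) :
    isolatedU2 n1 A = {v ∈ U2 n n1 | Disjoint A (u2Star n1 v)} := by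
  ext v
  simp only [isolatedU2, U2, Finset.mem_filter, mem_univ, true_and, u2Star,
    Finset.disjoint_left, not_and, not_or]
  exact and_congr_right fun _ => forall₂_congr fun e he => by simp [hA he]

theorem IsPM.exists_injective_partner {n : ℕ} {M : Finset (Fin n × Fin n)} (hM : IsPM M) :
    ∃ f : Fin n → Fin n, f.Injective ∧ ∀ v, (v, f v) ∈ M ∨ (f v, v) ∈ M := by
  have hpartner : ∀ v, ∃ w, (v, w) ∈ M ∨ (w, v) ∈ M := fun v => by
    obtain ⟨e, ⟨he, rfl | rfl⟩, -⟩ := hM.2 v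
    exacts [⟨e.2, Or.inl he⟩, ⟨e.1, Or.inr he⟩]
  choose f hf using hpartner
  refine ⟨f, fun v v' hvv' => ?_, hf⟩
  rcases hf v with h | h <;> rcases hf v' with h' | h' <;>
    have := (hM.2 (f v)).unique ⟨h, by simp⟩ ⟨h', by simp [hvv']⟩ <;>
    simp_all [Prod.ext_iff]

theorem card_isolatedU2_le_of_hasPM {n n1 : ℕ} {A : Finset (Fin n × Fin n)} (h : HasPM A) :
    #(isolatedU2 n1 A) ≤ n1 := by
  obtain ⟨M, hMA, hM⟩ := h
  obtain ⟨f, hf, hfM⟩ := hM.exists_injective_partner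
  refine (card_le_card_of_injOn (fun v => (f v).val) (t := range n1) ?_ ?_).trans_eq
    (card_range n1)
  · intro v hv
    simp only [isolatedU2, coe_filter, mem_univ, true_and, Set.mem_ofPred_eq] at hv
    simp only [coe_range, Set.mem_Iio]
    by_contra hle
    rcases hfM v with he | he
    · exact (hv.2 _ (hMA he)).1 ⟨rfl, not_lt.1 hle⟩
    · exact (hv.2 _ (hMA he)).2 ⟨rfl, not_lt.1 hle⟩
  · exact fun v _ v' _ h => hf (Fin.ext h)

section ChungLuMoments

variable {n n1 k d1 d2 D : ℕ}

theorem sum_bernoulliWeight_mul_card_avoid_u2Star (hn : n1 + k + 2 = n) :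
    ∑ A ∈ (pairs n).powerset, bernoulliWeight (pairs n) (chungLuProb n1 d1 d2 D) A *
        (#{v ∈ U2 n n1 | Disjoint A (u2Star n1 v)} : ℝ) =
      (k + 2) * (1 - chungLuProbU2 d2 D) ^ (k + 1) := by
  have hstar : ∀ v ∈ U2 n n1, ∏ e ∈ u2Star n1 v, (1 - chungLuProb n1 d1 d2 D e) =
      (1 - chungLuProbU2 d2 D) ^ (k + 1) := fun v hv => by
    rw [prod_one_sub_chungLuProb fun e => mem_U2_of_mem_u2Star hv, card_u2Star hv]
    congr 1
    omega
  rw [sum_bernoulliWeight_mul_card_filter_disjoint _ (u2Star_subset_pairs n1),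
    sum_congr rfl hstar, sum_const, card_U2, nsmul_eq_mul, show n - n1 = k + 2 by omega]
  push_cast
  ring

theorem sum_bernoulliWeight_mul_card_avoid_u2Star_sq (hn : n1 + k + 2 = n) :
    ∑ A ∈ (pairs n).powerset, bernoulliWeight (pairs n) (chungLuProb n1 d1 d2 D) A *
        (#{v ∈ U2 n n1 | Disjoint A (u2Star n1 v)} : ℝ) ^ 2 =
      (k + 2) * (1 - chungLuProbU2 d2 D) ^ (k + 1) +
        (k + 2) * (k + 1) * (1 - chungLuProbU2 d2 D) ^ (2 * k + 1) := by
  have hdiag : ∀ u ∈ U2 n n1, ∏ e ∈ u2Star n1 u ∪ u2Star n1 u,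
      (1 - chungLuProb n1 d1 d2 D e) = (1 - chungLuProbU2 d2 D) ^ (k + 1) := fun u hu => by
    rw [union_self, prod_one_sub_chungLuProb fun e => mem_U2_of_mem_u2Star hu, card_u2Star hu]
    congr 1
    omega
  have hoff : ∀ u ∈ U2 n n1, ∀ v ∈ (U2 n n1).erase u, ∏ e ∈ u2Star n1 u ∪ u2Star n1 v,
      (1 - chungLuProb n1 d1 d2 D e) = (1 - chungLuProbU2 d2 D) ^ (2 * k + 1) := by
    intro u hu v hv
    obtain ⟨hvu, hv⟩ := mem_erase.1 hv
    rw [prod_one_sub_chungLuProb fun e he => (mem_union.1 he).elim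
      (mem_U2_of_mem_u2Star hu) (mem_U2_of_mem_u2Star hv)]
    have := card_u2Star_union hu hv (Ne.symm hvu)
    congr 1
    omega
  have hrow : ∀ u ∈ U2 n n1, ∑ v ∈ U2 n n1, ∏ e ∈ u2Star n1 u ∪ u2Star n1 v,
      (1 - chungLuProb n1 d1 d2 D e) = (1 - chungLuProbU2 d2 D) ^ (k + 1) +
        (k + 1) * (1 - chungLuProbU2 d2 D) ^ (2 * k + 1) := by
    intro u hu
    rw [← add_sum_erase _ _ hu, hdiag u hu, sum_congr rfl (hoff u hu), sum_const,
      card_erase_of_mem hu, card_U2, nsmul_eq_mul, show n - n1 - 1 = k + 1 by omega]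
    push_cast
    ring
  rw [sum_bernoulliWeight_mul_card_filter_disjoint_sq _ (u2Star_subset_pairs n1),
    sum_congr rfl hrow, sum_const, card_U2, nsmul_eq_mul, show n - n1 = k + 2 by omega]
  push_cast
  ring

end ChungLuMoments

theorem variance_le_of_le_half {q : ℝ} (hq0 : 0 ≤ q) (hq : q ≤ 1 / 2) (k : ℕ) :
    (k + 2) * (1 - q) ^ (k + 1) + (k + 2) * (k + 1) * (1 - q) ^ (2 * k + 1) -
        ((k + 2) * (1 - q) ^ (k + 1)) ^ 2 ≤
      (k + 2) * (1 - q) ^ (k + 1) + 2 * q * ((k + 2) * (1 - q) ^ (k + 1)) ^ 2 := by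
  have hsq : ((k + 2) * (1 - q) ^ (k + 1)) ^ 2 = (k + 2) ^ 2 * (1 - q) ^ (2 * k + 1) * (1 - q) := by
    ring
  have hR : 0 ≤ (k + 2) * (1 - q) ^ (2 * k + 1) := by
    have : 0 ≤ 1 - q := by linarith
    positivity
  rw [hsq]
  nlinarith [mul_nonneg hR (mul_nonneg hq0 (by linarith : (0 : ℝ) ≤ 1 - 2 * q))]

theorem probGraph_card_isolatedU2_le_le {n n1 k d1 d2 D : ℕ} (hn : n1 + k + 2 = n)
    (hq : chungLuProbU2 d2 D ≤ 1 / 2)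
    (hμ : 2 * n1 ≤ (k + 2) * (1 - chungLuProbU2 d2 D) ^ (k + 1)) :
    probGraph n (chungLuProb n1 d1 d2 D) (fun A => #(isolatedU2 n1 A) ≤ n1) ≤
      4 / ((k + 2) * (1 - chungLuProbU2 d2 D) ^ (k + 1)) + 8 * chungLuProbU2 d2 D := by
  set q := chungLuProbU2 d2 D
  set μ : ℝ := (k + 2) * (1 - q) ^ (k + 1)
  have hq0 : 0 ≤ q := chungLuProbU2_nonneg d2 D
  have hμpos : 0 < μ := by
    have : 0 < 1 - q := by linarith
    positivity
  have hevent : probGraph n (chungLuProb n1 d1 d2 D) (fun A => #(isolatedU2 n1 A) ≤ n1) =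
      ∑ A ∈ (pairs n).powerset with (#{v ∈ U2 n n1 | Disjoint A (u2Star n1 v)} : ℝ) ≤ n1,
        bernoulliWeight (pairs n) (chungLuProb n1 d1 d2 D) A := by
    rw [probGraph_eq_sum_filter]
    refine sum_congr (filter_congr fun A hA => ?_) fun _ _ => rfl
    rw [isolatedU2_eq_filter_disjoint (mem_powerset.1 hA), Nat.cast_le]
  have hchebyshev := sum_filter_le_le_variance_div
    (fun A _ => bernoulliWeight_nonneg (chungLuProb_nonneg n1 d1 d2 D)
      (chungLuProb_le_one n1 d1 d2 D) A)
    (sum_powerset_bernoulliWeight _ _)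
    (fun A => (#{v ∈ U2 n n1 | Disjoint A (u2Star n1 v)} : ℝ)) (a := n1)
    (by rw [sum_bernoulliWeight_mul_card_avoid_u2Star hn]; linarith)
  rw [sum_bernoulliWeight_mul_card_avoid_u2Star hn,
    sum_bernoulliWeight_mul_card_avoid_u2Star_sq hn] at hchebyshev
  rw [hevent]
  calc _ ≤ _ := hchebyshev
    _ ≤ (μ + 2 * q * μ ^ 2) / (μ / 2) ^ 2 := by
      refine div_le_div₀ (by positivity) ?_ (by positivity) ?_
      · exact variance_le_of_le_half hq0 hq k
      · exact pow_le_pow_left₀ (by positivity) (by linarith) 2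
    _ = 4 / μ + 8 * q := by
      field_simp
      ring

theorem rpow_neg_two_mul_le_one_sub_pow {x q ε : ℝ} (hx : 0 < x) (hq0 : 0 ≤ q)
    (hq : q ≤ 1 / 2) {m : ℕ} (hm : m * q ≤ ε * Real.log x) :
    x ^ (-(2 * ε)) ≤ (1 - q) ^ m := by
  have hexp : Real.exp (-(2 * q)) ≤ 1 - q := by
    rw [Real.exp_neg, inv_le_comm₀ (Real.exp_pos _) (by linarith)]
    calc (1 - q)⁻¹ ≤ 1 + 2 * q := by
          rw [inv_le_iff_one_le_mul₀ (by linarith)]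
          nlinarith
      _ ≤ Real.exp (2 * q) := by linarith [Real.add_one_le_exp (2 * q)]
  calc x ^ (-(2 * ε)) = Real.exp (-(2 * (ε * Real.log x))) := by
        rw [Real.rpow_def_of_pos hx]
        ring_nf
    _ ≤ Real.exp (-(2 * q)) ^ m := by
        rw [← Real.exp_nat_mul]
        gcongr
        linarith
    _ ≤ (1 - q) ^ m := pow_le_pow_left₀ (Real.exp_nonneg _) hexp m

theorem eventually_rpow_le_mul_rpow {a b c : ℝ} (hab : a < b) (hc : 0 < c) :
    ∀ᶠ x : ℝ in atTop, x ^ a ≤ c * x ^ b := by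
  filter_upwards [(tendsto_rpow_neg_atTop (sub_pos.2 hab)).eventually (eventually_le_nhds hc),
    eventually_gt_atTop 0] with x hx hxpos
  calc x ^ a = x ^ (-(b - a)) * x ^ b := by rw [← Real.rpow_add hxpos]; ring_nf
    _ ≤ c * x ^ b := by gcongr

theorem probGraph_card_isolatedU2_le_le_rpow {n n1 d1 d2 D : ℕ} {ε : ℝ} (hε : 0 ≤ ε)
    (hn : 3 ≤ n) (hn1 : (n1 : ℝ) ≤ (n : ℝ) ^ (1 - 2 * ε) / 4)
    (hq : chungLuProbU2 d2 D ≤ 1 / 2) (hqn : n * chungLuProbU2 d2 D ≤ ε * Real.log n) :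
    probGraph n (chungLuProb n1 d1 d2 D) (fun A => #(isolatedU2 n1 A) ≤ n1) ≤
      8 * (n : ℝ) ^ (-(1 - 2 * ε)) + 8 * chungLuProbU2 d2 D := by
  set q := chungLuProbU2 d2 D
  have hq0 : 0 ≤ q := chungLuProbU2_nonneg d2 D
  have hn3 : (3 : ℝ) ≤ n := by exact_mod_cast hn
  have hθ : (n : ℝ) ^ (1 - 2 * ε) ≤ n := by
    conv_rhs => rw [← Real.rpow_one (n : ℝ)]
    exact Real.rpow_le_rpow_of_exponent_le (by linarith) (by linarith)
  obtain ⟨k, hk⟩ : ∃ k, n1 + k + 2 = n := ⟨n - n1 - 2, by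
    have : ((n1 + 2 : ℕ) : ℝ) ≤ n := by push_cast; linarith
    have := Nat.cast_le.1 this
    omega⟩
  have hkR : (k : ℝ) + 2 = n - n1 := by
    rw [← hk]
    push_cast
    ring
  have hpow : (n : ℝ) ^ (-(2 * ε)) ≤ (1 - q) ^ (k + 1) := by
    refine rpow_neg_two_mul_le_one_sub_pow (by linarith) hq0 hq ?_
    have : ((k + 1 : ℕ) : ℝ) ≤ n := by exact_mod_cast (by omega : k + 1 ≤ n)
    nlinarith
  have hμ : (n : ℝ) ^ (1 - 2 * ε) / 2 ≤ (k + 2) * (1 - q) ^ (k + 1) := by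
    rw [sub_eq_add_neg, Real.rpow_add (by linarith), Real.rpow_one, hkR]
    calc (n : ℝ) * (n : ℝ) ^ (-(2 * ε)) / 2 = n / 2 * (n : ℝ) ^ (-(2 * ε)) := by ring
      _ ≤ (n - n1) * (1 - q) ^ (k + 1) :=
        mul_le_mul (by linarith) hpow (by positivity) (by linarith)
  calc _ ≤ 4 / ((k + 2) * (1 - q) ^ (k + 1)) + 8 * q :=
        probGraph_card_isolatedU2_le_le hk hq (by linarith)
    _ ≤ 4 / ((n : ℝ) ^ (1 - 2 * ε) / 2) + 8 * q := by gcongr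
    _ = 8 * (n : ℝ) ^ (-(1 - 2 * ε)) + 8 * q := by
      rw [Real.rpow_neg (by linarith)]
      field_simp
      ring

theorem tendsto_of_tendsto_div_log_div {s : ℕ → ℝ}
    (h : Tendsto (fun n => s n / (Real.log n / n)) atTop (nhds 0)) :
    Tendsto s atTop (nhds 0) := by
  have hlog : Tendsto (fun n : ℕ => Real.log n / n) atTop (nhds 0) :=
    Real.isLittleO_log_id_atTop.tendsto_div_nhds_zero.comp tendsto_natCast_atTop_atTop
  refine (zero_mul (0 : ℝ) ▸ h.mul hlog).congr' ?_
  filter_upwards [eventually_gt_atTop 1] with n hn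
  have : 0 < Real.log n := Real.log_pos (by exact_mod_cast hn)
  exact div_mul_cancel₀ _ (by positivity)

theorem tendsto_probGraph_card_isolatedU2_le (n1 d1 d2 D : ℕ → ℕ) {δ : ℝ} (hδ : δ < 1)
    (hn1 : ∀ᶠ n : ℕ in atTop, (n1 n : ℝ) ≤ (n : ℝ) ^ δ)
    (hsmall : Tendsto (fun n => ((d2 n * d2 n : ℕ) : ℝ) / (D n : ℝ) / (Real.log n / n))
      atTop (nhds 0)) :
    Tendsto (fun n => probGraph n (chungLuProb (n1 n) (d1 n) (d2 n) (D n))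
      fun A => #(isolatedU2 (n1 n) A) ≤ n1 n) atTop (nhds 0) := by
  have hδ0 : 0 ≤ max δ 0 := le_max_right δ 0
  have hδ1 : max δ 0 < 1 := max_lt hδ one_pos
  set ε := (1 - max δ 0) / 4 with hεdef
  have hε : 0 < ε := by rw [hεdef]; linarith
  have hδθ : max δ 0 < 1 - 2 * ε := by rw [hεdef]; linarith
  have hθ : 0 < 1 - 2 * ε := by linarith
  have hq : Tendsto (fun n => chungLuProbU2 (d2 n) (D n)) atTop (nhds 0) :=
    squeeze_zero (fun n => chungLuProbU2_nonneg _ _) (fun n => min_le_right _ _)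
      (tendsto_of_tendsto_div_log_div hsmall)
  have hbound : Tendsto (fun n : ℕ => 8 * (n : ℝ) ^ (-(1 - 2 * ε)) +
      8 * chungLuProbU2 (d2 n) (D n)) atTop (nhds 0) := by
    simpa using (((tendsto_rpow_neg_atTop hθ).comp tendsto_natCast_atTop_atTop).const_mul 8).add
      (hq.const_mul 8)
  refine squeeze_zero' (Eventually.of_forall fun n => probGraph_nonneg
    (chungLuProb_nonneg _ _ _ _) (chungLuProb_le_one _ _ _ _) _) ?_ hbound
  filter_upwards [hn1, eventually_ge_atTop 3, hsmall.eventually (eventually_le_nhds hε),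
    hq.eventually (eventually_le_nhds (by norm_num : (0 : ℝ) < 1 / 2)),
    tendsto_natCast_atTop_atTop.eventually
      (eventually_rpow_le_mul_rpow hδθ (by norm_num : (0 : ℝ) < 1 / 4))]
    with n hn1 hn3 hsn hqn hpow
  have hn : (1 : ℝ) < n := by exact_mod_cast (by omega : 1 < n)
  refine probGraph_card_isolatedU2_le_le_rpow hε.le hn3 ?_ hqn ?_
  · calc (n1 n : ℝ) ≤ (n : ℝ) ^ δ := hn1
      _ ≤ (n : ℝ) ^ max δ 0 := Real.rpow_le_rpow_of_exponent_le hn.le (le_max_left δ 0)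
      _ ≤ (n : ℝ) ^ (1 - 2 * ε) / 4 := by linarith
  · have hlogn : 0 < Real.log n / n := div_pos (Real.log_pos hn) (by linarith)
    calc n * chungLuProbU2 (d2 n) (D n) ≤ n * (((d2 n * d2 n : ℕ) : ℝ) / (D n : ℝ)) :=
          mul_le_mul_of_nonneg_left (min_le_right _ _) (by positivity)
      _ ≤ n * (ε * (Real.log n / n)) := by
          gcongr
          rwa [div_le_iff₀ hlogn] at hsn
      _ = ε * Real.log n := by field_simp

open Classical in
theorem stmt11_general (n1 n2 d1 d2 : ℕ → ℕ)
    (δ : ℝ) (hδ : δ < 1)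
    (hn1 : ∀ᶠ n : ℕ in atTop, (n1 n : ℝ) ≤ ((n : ℝ)) ^ δ)
    (hsmall : Tendsto (fun n =>
        (((d2 n * d2 n : ℕ) : ℝ) / ((n1 n * d1 n + n2 n * d2 n : ℕ) : ℝ)) /
          (Real.log n / (n : ℝ))) atTop (nhds 0)) :
    Tendsto (fun n => probGraph n
        (fun e => min 1 (((bideg (n1 n) (d1 n) (d2 n) e.1 *
              bideg (n1 n) (d1 n) (d2 n) e.2 : ℕ) : ℝ) /
            ((n1 n * d1 n + n2 n * d2 n : ℕ) : ℝ)))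
        (fun A => n1 n <
          (Finset.univ.filter fun v : Fin n => n1 n ≤ v.val ∧
            ∀ e ∈ A, ¬(e.1 = v ∧ n1 n ≤ e.2.val) ∧ ¬(e.2 = v ∧ n1 n ≤ e.1.val)).card))
      atTop (nhds 1)
    ∧ Tendsto (fun n => probGraph n
        (fun e => min 1 (((bideg (n1 n) (d1 n) (d2 n) e.1 *
              bideg (n1 n) (d1 n) (d2 n) e.2 : ℕ) : ℝ) /
            ((n1 n * d1 n + n2 n * d2 n : ℕ) : ℝ)))
        HasPM)
      atTop (nhds 0) := by
  have hfew := tendsto_probGraph_card_isolatedU2_le n1 d1 d2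
    (fun n => n1 n * d1 n + n2 n * d2 n) hδ hn1 hsmall
  constructor
  · refine (sub_zero (1 : ℝ) ▸ tendsto_const_nhds.sub hfew).congr fun n => ?_
    rw [eq_comm, probGraph_eq_one_sub_not]
    simp only [not_lt]
    rfl
  · exact squeeze_zero
      (fun n => probGraph_nonneg (chungLuProb_nonneg _ _ _ _) (chungLuProb_le_one _ _ _ _) _)
      (fun n => probGraph_mono (chungLuProb_nonneg _ _ _ _) (chungLuProb_le_one _ _ _ _)
        fun _ _ => card_isolatedU2_le_of_hasPM)
      hfew

open Classical in
/-- 0-statement for bi-valued Chung–Lu (family `D₂`): if `n1 ≤ n^δ` for a fixed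
`δ < 1` and `d2²/‖d‖₁ = o(log n / n)`, then a.a.s. the number of vertices of `U₂`
with no neighbour in `U₂` exceeds `n1`, and consequently a.a.s. `G_CL(n,d)` has no
perfect matching. -/
theorem stmt11 (n1 n2 d1 d2 : ℕ → ℕ) (hn : ∀ n, n1 n + n2 n = n)
    (hbv : ∀ n, d2 n < d1 n) (hd2 : ∀ n, 1 ≤ d2 n)
    (δ : ℝ) (hδ : δ < 1)
    (hn1 : ∀ᶠ n : ℕ in atTop, (n1 n : ℝ) ≤ ((n : ℝ)) ^ δ)
    (hsmall : Tendsto (fun n =>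
        (((d2 n * d2 n : ℕ) : ℝ) / ((n1 n * d1 n + n2 n * d2 n : ℕ) : ℝ)) /
          (Real.log n / (n : ℝ))) atTop (nhds 0)) :
    Tendsto (fun n => probGraph n
        (fun e => min 1 (((bideg (n1 n) (d1 n) (d2 n) e.1 *
              bideg (n1 n) (d1 n) (d2 n) e.2 : ℕ) : ℝ) /
            ((n1 n * d1 n + n2 n * d2 n : ℕ) : ℝ)))
        (fun A => n1 n <
          (Finset.univ.filter fun v : Fin n => n1 n ≤ v.val ∧
            ∀ e ∈ A, ¬(e.1 = v ∧ n1 n ≤ e.2.val) ∧ ¬(e.2 = v ∧ n1 n ≤ e.1.val)).card))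
      atTop (nhds 1)
    ∧ Tendsto (fun n => probGraph n
        (fun e => min 1 (((bideg (n1 n) (d1 n) (d2 n) e.1 *
              bideg (n1 n) (d1 n) (d2 n) e.2 : ℕ) : ℝ) /
            ((n1 n * d1 n + n2 n * d2 n : ℕ) : ℝ)))
        HasPM)
      atTop (nhds 0) :=
  stmt11_general n1 n2 d1 d2 δ hδ hn1 hsmall
end

section
/- Let d = d(n) be a sequence of bi-valued degree sequences on [n] (value d_1 with multiplicity n_1 and value d_2 with multiplicity n_2 = n − n_1, where d_1 ≥ d_2 ≥ 2) satisfying d_2² = o(n_1), d_1² = o(√(n·d_2)), and n_1 ≤ n^δ for some fixed δ < 1. Let k = k(n) = Θ(1) be a bounded sequence bounded away from 0, and let T = T(n) satisfy T = O(d_1²). Set A = ∑_{i=1}^n d_i(d_i − 1), B = A − T, A' = A/(2‖d‖_1), and B' = B/(2‖d‖_1 − k·d_2). Then Z := (A' − B')·(1 + A' + B') = o(1) as n → ∞. -/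
/-!
With `x = ‖d‖₁` and `y = k d₂` one has `A' - B' = T / (2x - y) - A y / (2x (2x - y))`.
Since `‖d‖₁ ≥ n d₂` and `A ≤ d₁ ‖d‖₁`, this is `O(q)` with `q = d₁² / (n d₂)`, while
`1 + A' + B' = O(1 + d₁ + q)`. Hence `Z = O(q + q d₁) = O(d₁⁴ / (n d₂))`, the square of
`d₁² / √(n d₂) → 0`.
-/

open Filter

theorem abs_div_two_mul_sub_le {x y : ℝ} (hx : 0 < x) (hy : |y| ≤ x) (b : ℝ) :
    |b / (2 * x - y)| ≤ |b| / x := by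
  have hxy : x ≤ |2 * x - y| := by
    rw [abs_of_pos (by linarith [le_abs_self y])]
    linarith [le_abs_self y]
  rw [abs_div]
  exact div_le_div_of_nonneg_left (abs_nonneg b) hx hxy

theorem abs_div_two_mul_sub_div_two_mul_sub_le {x y a D : ℝ} (hx : 0 < x) (hy : |y| ≤ x)
    (ha : 0 ≤ a) (haD : a ≤ D * x) (t : ℝ) :
    |a / (2 * x) - (a - t) / (2 * x - y)| ≤ |t| / x + D * |y| / (2 * x) := by
  have hxy : 2 * x - y ≠ 0 := by linarith [le_abs_self y]
  have hsplit : a / (2 * x) - (a - t) / (2 * x - y) =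
      t / (2 * x - y) - a * y / (2 * x) / (2 * x - y) := by
    field_simp
    ring
  have hsecond : |a * y / (2 * x) / (2 * x - y)| ≤ D * |y| / (2 * x) := by
    calc |a * y / (2 * x) / (2 * x - y)| ≤ |a * y / (2 * x)| / x :=
          abs_div_two_mul_sub_le hx hy _
      _ = a / x * |y| / (2 * x) := by
          rw [abs_div, abs_mul, abs_of_nonneg ha, abs_of_pos (by positivity : 0 < 2 * x)]
          ring
      _ ≤ D * |y| / (2 * x) := by
          gcongr
          exact (div_le_iff₀ hx).2 haD
  rw [hsplit]
  exact (abs_sub _ _).trans (add_le_add (abs_div_two_mul_sub_le hx hy t) hsecond)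

theorem abs_one_add_div_two_mul_add_div_two_mul_sub_le {x y a D : ℝ} (hx : 0 < x)
    (hy : |y| ≤ x) (ha : 0 ≤ a) (haD : a ≤ D * x) (t : ℝ) :
    |1 + a / (2 * x) + (a - t) / (2 * x - y)| ≤ 1 + 2 * D + |t| / x := by
  have hax : a / x ≤ D := (div_le_iff₀ hx).2 haD
  have hD : 0 ≤ D := (div_nonneg ha hx.le).trans hax
  have hfirst : a / (2 * x) ≤ D / 2 := by
    rw [mul_comm, ← div_div]
    linarith
  have hsecond : |(a - t) / (2 * x - y)| ≤ D + |t| / x := by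
    calc |(a - t) / (2 * x - y)| ≤ |a - t| / x := abs_div_two_mul_sub_le hx hy _
      _ ≤ (a + |t|) / x := by
          gcongr
          exact (abs_sub _ _).trans_eq (by rw [abs_of_nonneg ha])
      _ = a / x + |t| / x := add_div _ _ _
      _ ≤ D + |t| / x := by linarith
  have hpos : 0 ≤ 1 + a / (2 * x) := by positivity
  calc |1 + a / (2 * x) + (a - t) / (2 * x - y)|
      ≤ |1 + a / (2 * x)| + |(a - t) / (2 * x - y)| := abs_add_le _ _
    _ ≤ 1 + 2 * D + |t| / x := by
        rw [abs_of_nonneg hpos]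
        linarith

section BivaluedSums

variable {m1 m2 D1 D2 : ℝ}

theorem add_mul_le_mul_add_mul (hm1 : 0 ≤ m1) (hD12 : D2 ≤ D1) :
    (m1 + m2) * D2 ≤ m1 * D1 + m2 * D2 := by
  nlinarith

theorem mul_mul_sub_one_add_nonneg (hm1 : 0 ≤ m1) (hm2 : 0 ≤ m2) (hD2 : 1 ≤ D2)
    (hD12 : D2 ≤ D1) :
    0 ≤ m1 * (D1 * (D1 - 1)) + m2 * (D2 * (D2 - 1)) := by
  have h1 : 0 ≤ D1 * (D1 - 1) := mul_nonneg (by linarith) (by linarith)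
  have h2 : 0 ≤ D2 * (D2 - 1) := mul_nonneg (by linarith) (by linarith)
  positivity

theorem mul_mul_sub_one_add_le (hm1 : 0 ≤ m1) (hm2 : 0 ≤ m2) (hD2 : 0 ≤ D2)
    (hD12 : D2 ≤ D1) :
    m1 * (D1 * (D1 - 1)) + m2 * (D2 * (D2 - 1)) ≤ D1 * (m1 * D1 + m2 * D2) := by
  have h1 : m1 * (D1 * (D1 - 1)) ≤ m1 * (D1 * D1) :=
    mul_le_mul_of_nonneg_left (by nlinarith) hm1
  have h2 : m2 * (D2 * (D2 - 1)) ≤ m2 * (D2 * D1) :=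
    mul_le_mul_of_nonneg_left (by nlinarith) hm2
  linarith

end BivaluedSums

noncomputable def bivaluedZ (m1 m2 D1 D2 k t : ℝ) : ℝ :=
  let A := m1 * (D1 * (D1 - 1)) + m2 * (D2 * (D2 - 1))
  let nd := m1 * D1 + m2 * D2
  let A' := A / (2 * nd)
  let B' := (A - t) / (2 * nd - k * D2)
  (A' - B') * (1 + A' + B')

theorem abs_bivaluedZ_le {m1 m2 D1 D2 k t K CT : ℝ} (hm1 : 0 ≤ m1) (hm2 : 0 ≤ m2)
    (hN : 0 < m1 + m2) (hD2 : 1 ≤ D2) (hD12 : D2 ≤ D1) (hk : |k| ≤ K) (hK : K ≤ m1 + m2)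
    (ht : |t| ≤ CT * D1 ^ 2) (hη : D1 ^ 4 / ((m1 + m2) * D2) ≤ 1) :
    |bivaluedZ m1 m2 D1 D2 k t| ≤ (CT + K) * (3 + CT) * (D1 ^ 4 / ((m1 + m2) * D2)) := by
  set nd := m1 * D1 + m2 * D2
  set η := D1 ^ 4 / ((m1 + m2) * D2)
  set q := D1 ^ 2 / ((m1 + m2) * D2)
  have hD1 : 1 ≤ D1 := hD2.trans hD12
  have hND2 : 0 < (m1 + m2) * D2 := by positivity
  have hnd_ge : (m1 + m2) * D2 ≤ nd := add_mul_le_mul_add_mul hm1 hD12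
  have hnd0 : 0 < nd := hND2.trans_le hnd_ge
  have hA0 := mul_mul_sub_one_add_nonneg hm1 hm2 hD2 hD12
  have hAle := mul_mul_sub_one_add_le hm1 hm2 (by linarith) hD12
  have hK0 : 0 ≤ K := (abs_nonneg k).trans hk
  have hCT : 0 ≤ CT := nonneg_of_mul_nonneg_left ((abs_nonneg t).trans ht) (by positivity)
  have hkD2 : |k * D2| ≤ K * D2 := by
    rw [abs_mul, abs_of_pos (by linarith : 0 < D2)]
    gcongr
  have hy : |k * D2| ≤ nd := hkD2.trans (by nlinarith)
  have htq : |t| / nd ≤ CT * q := by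
    calc |t| / nd ≤ CT * D1 ^ 2 / ((m1 + m2) * D2) :=
          div_le_div₀ (by positivity) ht hND2 hnd_ge
      _ = CT * q := mul_div_assoc _ _ _
  have hkq : D1 * |k * D2| / (2 * nd) ≤ K * q := by
    calc D1 * |k * D2| / (2 * nd) ≤ D1 * (K * D2) / nd :=
          div_le_div₀ (by positivity) (mul_le_mul_of_nonneg_left hkD2 (by linarith)) hnd0
            (by linarith)
      _ = K * (D1 * D2 / nd) := by ring
      _ ≤ K * q := by
          gcongr
          exact div_le_div₀ (by positivity) (by nlinarith) hND2 hnd_ge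
  have hdiff := abs_div_two_mul_sub_div_two_mul_sub_le hnd0 hy hA0 hAle t
  have hsum := abs_one_add_div_two_mul_add_div_two_mul_sub_le hnd0 hy hA0 hAle t
  have hq0 : 0 ≤ q := by positivity
  have hqD1 : q * D1 ≤ η := by
    rw [div_mul_eq_mul_div]
    refine div_le_div_of_nonneg_right ?_ hND2.le
    calc D1 ^ 2 * D1 = D1 ^ 3 := by ring
      _ ≤ D1 ^ 4 := pow_le_pow_right₀ hD1 (by norm_num)
  have hqη : q ≤ η := by nlinarith
  calc |bivaluedZ m1 m2 D1 D2 k t| = _ := abs_mul _ _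
    _ ≤ (CT + K) * q * (1 + 2 * D1 + CT * q) :=
        mul_le_mul (by linarith) (by linarith) (abs_nonneg _) (by positivity)
    _ ≤ (CT + K) * (3 + CT) * η := by
        rw [mul_assoc, mul_assoc]
        refine mul_le_mul_of_nonneg_left ?_ (by positivity)
        nlinarith [mul_le_mul_of_nonneg_left (hqη.trans hη) hq0]

theorem tendsto_pow_four_div_of_tendsto_sq_div_sqrt {f g : ℕ → ℝ} (hg : ∀ n, 0 ≤ g n)
    (h : Tendsto (fun n => f n ^ 2 / Real.sqrt (g n)) atTop (nhds 0)) :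
    Tendsto (fun n => f n ^ 4 / g n) atTop (nhds 0) := by
  have hsq := h.pow 2
  rw [zero_pow two_ne_zero] at hsq
  refine hsq.congr fun n => ?_
  rw [div_pow, Real.sq_sqrt (hg n), ← pow_mul]

theorem stmt17_general (n1 n2 d1 d2 : ℕ → ℕ)
    (hn : ∀ n, n1 n + n2 n = n)
    (hd2 : ∀ n, 2 ≤ d2 n) (hd12 : ∀ n, d2 n ≤ d1 n)
    (hA2 : Tendsto (fun n => ((d1 n : ℝ)) ^ 2 /
        Real.sqrt ((n : ℝ) * (d2 n : ℝ))) atTop (nhds 0))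
    (k : ℕ → ℝ) (c C : ℝ) (hk : ∀ n, c ≤ k n ∧ k n ≤ C)
    (T : ℕ → ℝ) (CT : ℝ) (hT : ∀ n, |T n| ≤ CT * ((d1 n : ℝ)) ^ 2) :
    Tendsto (fun n =>
        let A : ℝ := (n1 n : ℝ) * ((d1 n : ℝ) * ((d1 n : ℝ) - 1)) +
          (n2 n : ℝ) * ((d2 n : ℝ) * ((d2 n : ℝ) - 1));
        let nd : ℝ := (n1 n : ℝ) * (d1 n : ℝ) + (n2 n : ℝ) * (d2 n : ℝ);
        let B : ℝ := A - T n;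
        let A' : ℝ := A / (2 * nd);
        let B' : ℝ := B / (2 * nd - k n * (d2 n : ℝ));
        (A' - B') * (1 + A' + B'))
      atTop (nhds 0) := by
  set K := max |c| |C|
  have hη := tendsto_pow_four_div_of_tendsto_sq_div_sqrt (fun n => by positivity) hA2
  have hbound := hη.const_mul ((CT + K) * (3 + CT))
  rw [mul_zero] at hbound
  refine squeeze_zero_norm' ?_ hbound
  filter_upwards [hη.eventually_le_const zero_lt_one,
    tendsto_natCast_atTop_atTop.eventually_ge_atTop K,
    (tendsto_natCast_atTop_atTop (R := ℝ)).eventually_gt_atTop 0] with n hηn hKn hn0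
  have hsum : (n1 n : ℝ) + n2 n = n := by exact_mod_cast hn n
  rw [← hsum] at hηn hKn hn0 ⊢
  exact abs_bivaluedZ_le (Nat.cast_nonneg _) (Nat.cast_nonneg _) hn0
    (by exact_mod_cast one_le_two.trans (hd2 n)) (by exact_mod_cast hd12 n)
    (abs_le_max_abs_abs (hk n).1 (hk n).2) hKn (hT n) hηn

/-- The intermediate asymptotic lemma (Lemma "G(n,d) 0-statement Intermediate Lemma").
For bi-valued degree sequences (`d1 ≥ d2 ≥ 2`, multiplicities `n1`, `n2 = n - n1`)
with `d2² = o(n1)`, `d1² = o(√(n·d2))`, `n1 ≤ n^δ` for a fixed `δ < 1`, and with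
`k = Θ(1)` and `T = O(d1²)`, letting `A = ∑ d_i(d_i-1)`, `B = A - T`,
`A' = A/(2‖d‖₁)` and `B' = B/(2‖d‖₁ - k·d2)`, one has
`Z = (A' - B')·(1 + A' + B') = o(1)`. -/
theorem stmt17 (n1 n2 d1 d2 : ℕ → ℕ)
    (hn : ∀ n, n1 n + n2 n = n)
    (hd2 : ∀ n, 2 ≤ d2 n) (hd12 : ∀ n, d2 n ≤ d1 n)
    (hA1 : Tendsto (fun n => ((d2 n : ℝ)) ^ 2 / (n1 n : ℝ)) atTop (nhds 0))
    (hA2 : Tendsto (fun n => ((d1 n : ℝ)) ^ 2 /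
        Real.sqrt ((n : ℝ) * (d2 n : ℝ))) atTop (nhds 0))
    (δ : ℝ) (hδ : δ < 1)
    (hA5 : ∀ᶠ n : ℕ in atTop, (n1 n : ℝ) ≤ ((n : ℝ)) ^ δ)
    (k : ℕ → ℝ) (c C : ℝ) (hc : 0 < c) (hk : ∀ n, c ≤ k n ∧ k n ≤ C)
    (T : ℕ → ℝ) (CT : ℝ) (hT : ∀ n, |T n| ≤ CT * ((d1 n : ℝ)) ^ 2) :
    Tendsto (fun n =>
        let A : ℝ := (n1 n : ℝ) * ((d1 n : ℝ) * ((d1 n : ℝ) - 1)) +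
          (n2 n : ℝ) * ((d2 n : ℝ) * ((d2 n : ℝ) - 1));
        let nd : ℝ := (n1 n : ℝ) * (d1 n : ℝ) + (n2 n : ℝ) * (d2 n : ℝ);
        let B : ℝ := A - T n;
        let A' : ℝ := A / (2 * nd);
        let B' : ℝ := B / (2 * nd - k n * (d2 n : ℝ));
        (A' - B') * (1 + A' + B'))
      atTop (nhds 0) :=
  stmt17_general n1 n2 d1 d2 hn hd2 hd12 hA2 k c C hk T CT hT
end
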